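/- arXiv:2603.18932 — 4 statements merged into one kernel-verified Lean document; each statement's English description precedes it below -/
import Mathlib

section
/- Let p be an odd prime and n ≥ 2. There is a bijection between the set of stable admissible words of length n and the set of sequences (a_1, ..., a_k) of positive integers with k ≥ 0 (the empty sequence allowed) such that: each a_i is congruent to 0 or 1 modulo 2p−2; a_1 ≥ 4(p−1); a_{i+1} ≥ p·a_i for 1 ≤ i ≤ k−1; and p·a_k < (p−1)·(n + 1 + a_1 + ... + a_k) when k ≥ 1. Moreover, under this bijection the word corresponding to (a_1, ..., a_k) has degree n + 1 + a_1 + ... + a_k. -/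
/-!
Statement 1: for an odd prime `p` and `n ≥ 2`, stable admissible words (on the degree-2
generator `μ`) of length `n` are in bijection with the admissible sequences
`(a_1, …, a_k)` below, the word corresponding to `(a_1, …, a_k)` having degree
`n + 1 + a_1 + ⋯ + a_k`.
-/

/-- The alphabet `{x, σ, ρ^k, φ^k}` (the generator symbol is called `mu` here; for
Statement 0 it plays the role of `x`). -/
inductive Letter : Type
  | mu : Letter
  | sigma : Letter
  | rho : ℕ → Letter
  | phi : ℕ → Letter
  deriving DecidableEq

open Letter

/-- `allowedPair l r` holds when the letter `l` may appear immediately to the left of the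
letter `r` in an admissible word. -/
def allowedPair : Letter → Letter → Prop
  | l, mu => l = sigma
  | l, sigma => ∃ k, l = rho k
  | l, rho _ => l = sigma ∨ ∃ j, l = phi j
  | l, phi _ => l = sigma ∨ ∃ j, l = phi j

/-- An admissible word: a nonempty string (read left to right) whose rightmost letter is
the generator, and in which every pair of adjacent letters is allowed.  (These conditions
force the generator to occur only as the rightmost letter.) -/
def IsAdmissible (w : List Letter) : Prop :=
  w ≠ [] ∧ w.getLast? = some mu ∧ w.Chain' allowedPair

/-- A word is stable if its leftmost letter is the generator, `σ`, `ρ⁰` or `φ⁰`. -/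
def IsStable (w : List Letter) : Prop :=
  w.head? = some mu ∨ w.head? = some sigma ∨
    w.head? = some (rho 0) ∨ w.head? = some (phi 0)

/-- The degree of a word, defined recursively from the right; the generator has degree
`g`:  `deg(x) = g`, `deg(σw) = 1 + deg w`, `deg(ρᵏw) = pᵏ(1 + deg w)`,
`deg(φᵏw) = pᵏ(2 + p · deg w)`. -/
def degW (p g : ℕ) : List Letter → ℕ
  | [] => 0
  | mu :: _ => g
  | sigma :: w => 1 + degW p g w
  | rho k :: w => p ^ k * (1 + degW p g w)
  | phi k :: w => p ^ k * (2 + p * degW p g w)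

/-!
Every admissible word is obtained from `μ` by three moves: a step prepends `σ` (or `ρ⁰` in
front of a leading `σ`) and adds one to the degree; raising the exponent of a leading `ρ` or
`φ` multiplies the degree `d` by `p`; prepending `φ⁰` to a word starting with `ρ` or `φ`
sends `d` to `p d + 2`. Recording `(p - 1) d`, resp. `(p - 1) d + 1`, for each of the last
two moves gives the sequence `encode p w` (`d` is then even, so the entries are
`≡ 0, 1 mod 2p - 2`), and the degree is `length + 1 + sum`.

After a step the last entry `a` satisfies `p a ≤ (p - 1)(deg - 1)`, while after the two other
moves `p a ≥ (p - 1) deg - (p - 2)`, and those two moves reach different degrees mod `p`; so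
the last move can be read off the sequence, which gives injectivity. Conversely a sequence is
realised by realising it without its last entry at degree `d`, applying the corresponding
move and padding with steps. A word is stable exactly when its last move is not a raise,
i.e. when `p a_k < (p - 1) deg`.
-/

theorem List.IsChain.sub_one_mul_sum_add_headD_le {p : ℕ} (hp : 1 ≤ p) {b : List ℕ} {x : ℕ}
    (h : (b ++ [x]).IsChain (fun u v => p * u ≤ v)) : (p - 1) * b.sum + b.headD x ≤ x := by
  induction b with
  | nil => simp
  | cons y b ih =>
    rw [List.cons_append, List.isChain_cons] at h
    have hy : p * y ≤ b.headD x := h.1 _ (by cases b <;> simp)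
    have hpy : (p - 1) * y + y = p * y := by
      rw [← Nat.succ_mul, Nat.succ_eq_add_one, Nat.sub_add_cancel hp]
    have := ih h.2
    simp only [List.sum_cons, List.headD_cons, mul_add]
    omega

theorem Nat.le_of_sub_one_mul_le_add {p a b : ℕ} (hp : 2 ≤ p)
    (h : (p - 1) * a ≤ (p - 1) * b + (p - 2)) : a ≤ b := by
  by_contra hab
  have := Nat.mul_le_mul_left (p - 1) (Nat.succ_le_of_lt (Nat.lt_of_not_le hab))
  rw [Nat.mul_succ] at this
  omega

theorem Nat.mul_mod_sub_one_ne_one {p l : ℕ} (hp : 3 ≤ p)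
    (hl : l % (2 * (p - 1)) = 0 ∨ l % (2 * (p - 1)) = 1) : p * l % (2 * (p - 1)) ≠ 1 := by
  rw [Nat.mul_mod, Nat.mod_eq_of_lt (by omega : p < 2 * (p - 1))]
  rcases hl with h | h <;> rw [h]
  · simp
  · rw [mul_one, Nat.mod_eq_of_lt (by omega)]
    omega

theorem Nat.mul_ne_mul_add_two {p : ℕ} (hp : 3 ≤ p) (a b : ℕ) : p * a ≠ p * b + 2 := by
  intro h
  have hdvd : p ∣ 2 := (Nat.dvd_add_right (dvd_mul_right p b)).1 (h ▸ dvd_mul_right p a)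
  have := Nat.le_of_dvd two_pos hdvd
  omega

theorem isAdmissible_cons {l : Letter} {w : List Letter} :
    IsAdmissible (l :: w) ↔
      (l = mu ∧ w = []) ∨ (IsAdmissible w ∧ ∀ x ∈ w.head?, allowedPair l x) := by
  rcases w with _ | ⟨x, w⟩
  · simp [IsAdmissible, List.Chain']
  · simp only [IsAdmissible, List.Chain', List.isChain_cons, ne_eq, reduceCtorEq,
      not_false_eq_true, true_and, List.head?_cons, Option.mem_def, Option.some.injEq]
    tauto

@[simp]
theorem not_isAdmissible_nil : ¬IsAdmissible [] := fun h => h.1 rfl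

@[simp]
theorem allowedPair_mu (x : Letter) : ¬allowedPair mu x := by
  cases x <;> simp [allowedPair]

@[simp]
theorem allowedPair_sigma (x : Letter) : allowedPair sigma x ↔ x ≠ sigma := by
  cases x <;> simp [allowedPair]

@[simp]
theorem allowedPair_rho (k : ℕ) (x : Letter) : allowedPair (rho k) x ↔ x = sigma := by
  cases x <;> simp [allowedPair]

@[simp]
theorem allowedPair_phi (k : ℕ) (x : Letter) :
    allowedPair (phi k) x ↔ ∃ j, x = rho j ∨ x = phi j := by
  cases x <;> simp [allowedPair]

theorem IsAdmissible.tail_ne_nil {l : Letter} {w : List Letter} (h : IsAdmissible (l :: w))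
    (hl : l ≠ mu) : w ≠ [] := by
  rintro rfl
  simp_all [isAdmissible_cons]

theorem IsAdmissible.eq_singleton_mu {w : List Letter} (h : IsAdmissible w)
    (hw : w.length = 1) : w = [mu] := by
  obtain ⟨l, rfl⟩ := List.length_eq_one_iff.1 hw
  simp_all [isAdmissible_cons]

namespace AdmissibleWord

def encode (p : ℕ) : List Letter → List ℕ
  | [] => []
  | mu :: _ => []
  | sigma :: w => encode p w
  | rho 0 :: w => encode p w
  | rho (k + 1) :: w => encode p (rho k :: w) ++ [(p - 1) * degW p 2 (rho k :: w)]
  | phi 0 :: w => encode p w ++ [(p - 1) * degW p 2 w + 1]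
  | phi (k + 1) :: w => encode p (phi k :: w) ++ [(p - 1) * degW p 2 (phi k :: w)]

def StartsWithPower (w : List Letter) : Prop :=
  ∃ k t, w = rho k :: t ∨ w = phi k :: t

inductive Move
  | step
  | raise
  | phiZero

namespace Move

def apply : Move → List Letter → List Letter
  | step, w => if w.head? = some sigma then rho 0 :: w else sigma :: w
  | raise, rho k :: w => rho (k + 1) :: w
  | raise, phi k :: w => phi (k + 1) :: w
  | raise, w => w -- junk case, excluded by `Legal`
  | phiZero, w => phi 0 :: w

def Legal (m : Move) (w : List Letter) : Prop :=
  m = step ∨ StartsWithPower w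

def emit (p d : ℕ) : Move → List ℕ
  | step => []
  | raise => [(p - 1) * d]
  | phiZero => [(p - 1) * d + 1]

def deg (p d : ℕ) : Move → ℕ
  | step => d + 1
  | raise => p * d
  | phiZero => p * d + 2

def lengthInc : Move → ℕ
  | step => 1
  | raise => 0
  | phiZero => 1

variable {m : Move} {w : List Letter}

theorem isAdmissible_apply (h : IsAdmissible w) (hm : m.Legal w) : IsAdmissible (m.apply w) := by
  obtain ⟨x, w', rfl⟩ := List.exists_cons_of_ne_nil h.1
  rcases m with _ | _ | _
  · simp only [apply]
    split_ifs <;> refine isAdmissible_cons.2 (Or.inr ⟨h, ?_⟩) <;> simp_all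
  all_goals
    obtain ⟨k, t, he | he⟩ := hm.resolve_left (by simp) <;> cases he <;>
      simp_all [apply, isAdmissible_cons]

theorem encode_apply (p : ℕ) (hm : m.Legal w) :
    encode p (m.apply w) = encode p w ++ m.emit p (degW p 2 w) := by
  rcases m with _ | _ | _
  · simp only [apply]; split_ifs <;> simp [encode, emit]
  all_goals
    obtain ⟨k, t, rfl | rfl⟩ := hm.resolve_left (by simp) <;> simp [apply, encode, emit]

theorem degW_apply (p : ℕ) (hm : m.Legal w) :
    degW p 2 (m.apply w) = m.deg p (degW p 2 w) := by
  rcases m with _ | _ | _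
  · simp only [apply]; split_ifs <;> simp [degW, deg, add_comm]
  all_goals
    obtain ⟨k, t, rfl | rfl⟩ := hm.resolve_left (by simp) <;>
      simp [apply, degW, deg, pow_succ] <;> ring

theorem length_apply (hm : m.Legal w) : (m.apply w).length = w.length + m.lengthInc := by
  rcases m with _ | _ | _
  · simp only [apply]; split_ifs <;> simp [lengthInc]
  all_goals
    obtain ⟨k, t, rfl | rfl⟩ := hm.resolve_left (by simp) <;> simp [apply, lengthInc]

theorem phiZero_mul_emit_add {p : ℕ} (hp : 2 ≤ p) (d : ℕ) :
    p * ((p - 1) * d + 1) + (p - 2) = (p - 1) * (p * d + 2) := by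
  obtain ⟨r, rfl⟩ := Nat.exists_eq_add_of_le hp
  simp only [show 2 + r - 1 = r + 1 by omega, Nat.add_sub_cancel_left]
  ring

theorem sub_one_mul_deg_le {p d x : ℕ} (hp : 2 ≤ p) (hx : m.emit p d = [x]) :
    (p - 1) * m.deg p d ≤ p * x + (p - 2) := by
  rcases m with _ | _ | _ <;> simp only [emit, List.cons.injEq, reduceCtorEq, and_true] at hx <;>
    subst hx <;> simp only [deg]
  · exact (le_of_eq (by ring)).trans (Nat.le_add_right _ _)
  · exact (phiZero_mul_emit_add hp d).ge

theorem deg_injective {p : ℕ} (hp : 0 < p) (m : Move) : Function.Injective (m.deg p) := by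
  intro d₁ d₂ h
  cases m <;> simp only [deg] at h
  · omega
  · exact Nat.eq_of_mul_eq_mul_left hp h
  · exact Nat.eq_of_mul_eq_mul_left hp (by omega)

theorem deg_eq_add_lengthInc_add_sum {p : ℕ} (hp : 1 ≤ p) (d : ℕ) :
    m.deg p d = d + m.lengthInc + (m.emit p d).sum := by
  obtain ⟨q, rfl⟩ := Nat.exists_eq_add_of_le hp
  cases m <;> simp [deg, emit, lengthInc] <;> ring

end Move

@[elab_as_elim]
theorem _root_.IsAdmissible.induction_on_moves {P : List Letter → Prop} {w : List Letter}
    (hw : IsAdmissible w) (base : P [mu])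
    (move : ∀ (m : Move) t, IsAdmissible t → m.Legal t → P t → P (m.apply t)) : P w := by
  induction w with
  | nil => simp at hw
  | cons l s ih =>
    rcases isAdmissible_cons.1 hw with ⟨rfl, rfl⟩ | ⟨hs, hl⟩
    · exact base
    obtain ⟨x, s', rfl⟩ := List.exists_cons_of_ne_nil hs.1
    simp only [List.head?_cons, Option.mem_def, Option.some.injEq, forall_eq'] at hl
    cases l with
    | mu => simp at hl
    | sigma =>
      rw [allowedPair_sigma] at hl
      simpa [Move.apply, hl] using move .step _ hs (Or.inl rfl) (ih hs)
    | rho k =>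
      rw [allowedPair_rho] at hl
      subst hl
      induction k with
      | zero => simpa [Move.apply] using move .step _ hs (Or.inl rfl) (ih hs)
      | succ k ihk =>
        have hk : IsAdmissible (rho k :: sigma :: s') := by simp [isAdmissible_cons, hs]
        exact move .raise _ hk (Or.inr ⟨k, _, Or.inl rfl⟩) (ihk hk)
    | phi k =>
      rw [allowedPair_phi] at hl
      have hx : StartsWithPower (x :: s') := by
        obtain ⟨j, rfl | rfl⟩ := hl <;> exact ⟨j, s', by simp⟩
      induction k with
      | zero => exact move .phiZero _ hs (Or.inr hx) (ih hs)
      | succ k ihk =>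
        have hk : IsAdmissible (phi k :: x :: s') := by simp [isAdmissible_cons, hs, hl]
        exact move .raise _ hk (Or.inr ⟨k, _, Or.inr rfl⟩) (ihk hk)

theorem _root_.IsAdmissible.exists_move {w : List Letter} (hw : IsAdmissible w) :
    w = [mu] ∨ ∃ (m : Move) (t : List Letter), IsAdmissible t ∧ m.Legal t ∧ w = m.apply t :=
  IsAdmissible.induction_on_moves hw (Or.inl rfl) fun m t ht hm _ => Or.inr ⟨m, t, ht, hm, rfl⟩

variable {p : ℕ} {w : List Letter}

theorem degW_eq_length_add_sum (hp : 1 ≤ p) (hw : IsAdmissible w) :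
    degW p 2 w = w.length + 1 + (encode p w).sum := by
  refine IsAdmissible.induction_on_moves hw (by simp [degW, encode]) ?_
  intro m t _ hm ih
  rw [m.degW_apply p hm, m.deg_eq_add_lengthInc_add_sum hp, m.encode_apply p hm,
    m.length_apply hm, List.sum_append]
  omega

theorem even_degW_iff (hw : IsAdmissible w) : Even (degW p 2 w) ↔ w.head? ≠ some sigma := by
  refine IsAdmissible.induction_on_moves hw (by simp [degW]) ?_
  intro m t _ hm ih
  rw [m.degW_apply p hm]
  rcases m with _ | _ | _
  · simp only [Move.apply, Move.deg]
    split_ifs <;> simp_all [Nat.even_add_one]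
  all_goals
    obtain ⟨k, s, rfl | rfl⟩ := hm.resolve_left (by simp) <;>
      simp_all [Move.apply, Move.deg, Nat.even_add]

theorem StartsWithPower.even_degW (hw : IsAdmissible w) (h : StartsWithPower w) :
    Even (degW p 2 w) := by
  obtain ⟨k, s, rfl | rfl⟩ := h <;> simp [even_degW_iff hw]

theorem startsWithPower_of_even_degW (hw : IsAdmissible w) (hlen : 2 ≤ w.length)
    (he : Even (degW p 2 w)) : StartsWithPower w := by
  obtain ⟨x, s, rfl⟩ := List.exists_cons_of_ne_nil hw.1
  have hs : s ≠ [] := by rintro rfl; simp at hlen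
  rw [even_degW_iff hw] at he
  cases x with
  | mu =>
    obtain ⟨y, s', rfl⟩ := List.exists_cons_of_ne_nil hs
    simp [isAdmissible_cons] at hw
  | sigma => simp at he
  | rho k => exact ⟨k, s, Or.inl rfl⟩
  | phi k => exact ⟨k, s, Or.inr rfl⟩

theorem StartsWithPower.three_le_length (hw : IsAdmissible w) (h : StartsWithPower w) :
    3 ≤ w.length := by
  obtain ⟨k, s, rfl | rfl⟩ := h
  all_goals
    obtain ⟨hs, hl⟩ := (isAdmissible_cons.1 hw).resolve_left (by simp)
    obtain ⟨x, s', rfl⟩ := List.exists_cons_of_ne_nil hs.1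
    have hx : x ≠ mu := by rintro rfl; simp at hl
    have := List.length_pos_of_ne_nil (hs.tail_ne_nil hx)
    simp only [List.length_cons]
    omega

theorem StartsWithPower.four_le_degW (hp : 1 ≤ p) (hw : IsAdmissible w) (h : StartsWithPower w) :
    4 ≤ degW p 2 w := by
  have := h.three_le_length hw
  rw [degW_eq_length_add_sum hp hw]
  omega

theorem getLast_encode_le (hp : 2 ≤ p) (hw : IsAdmissible w) :
    ∀ l ∈ (encode p w).getLast?, p * l ≤ (p - 1) * degW p 2 w := by
  refine hw.induction_on_moves (by simp [encode]) ?_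
  intro m t _ hm ih
  rw [m.encode_apply p hm, m.degW_apply p hm]
  rcases m with _ | _ | _ <;> simp only [Move.emit, Move.deg, List.append_nil,
    List.getLast?_append, List.getLast?_singleton, Option.some_or, Option.mem_def,
    Option.some.injEq, forall_eq']
  · exact fun l hl => (ih l hl).trans (Nat.mul_le_mul_left _ (by omega))
  · exact (by ring : p * ((p - 1) * _) = (p - 1) * (p * _)).le
  · have := Move.phiZero_mul_emit_add hp (degW p 2 t)
    omega

theorem exists_of_mem_encode (hw : IsAdmissible w) {x : ℕ} (hx : x ∈ encode p w) :
    ∃ t, IsAdmissible t ∧ StartsWithPower t ∧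
      (x = (p - 1) * degW p 2 t ∨ x = (p - 1) * degW p 2 t + 1) := by
  revert hx
  refine hw.induction_on_moves (by simp [encode]) ?_
  intro m t ht hm ih hx
  rw [m.encode_apply p hm, List.mem_append] at hx
  rcases hx with hx | hx
  · exact ih hx
  rcases m with _ | _ | _ <;> simp only [Move.emit, List.mem_cons, List.not_mem_nil, or_false] at hx
  · exact ⟨t, ht, hm.resolve_left (by simp), Or.inl hx⟩
  · exact ⟨t, ht, hm.resolve_left (by simp), Or.inr hx⟩

theorem four_mul_le_of_mem_encode (hp : 1 ≤ p) (hw : IsAdmissible w) {x : ℕ}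
    (hx : x ∈ encode p w) : 4 * (p - 1) ≤ x := by
  obtain ⟨t, ht, hpow, hx⟩ := exists_of_mem_encode hw hx
  have := Nat.mul_le_mul_left (p - 1) (hpow.four_le_degW hp ht)
  rw [mul_comm] at this
  omega

theorem mod_of_mem_encode (hp : 2 ≤ p) (hw : IsAdmissible w) {x : ℕ} (hx : x ∈ encode p w) :
    x % (2 * (p - 1)) = 0 ∨ x % (2 * (p - 1)) = 1 := by
  obtain ⟨t, ht, hpow, hx⟩ := exists_of_mem_encode hw hx
  obtain ⟨k, hk⟩ := hpow.even_degW (p := p) ht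
  have hd : (p - 1) * degW p 2 t = 2 * (p - 1) * k := by rw [hk]; ring
  rcases hx with rfl | rfl <;> rw [hd]
  · simp
  · rw [Nat.mul_add_mod, Nat.mod_eq_of_lt (by omega)]
    simp

theorem isChain_encode (hp : 2 ≤ p) (hw : IsAdmissible w) :
    (encode p w).IsChain (fun x y => p * x ≤ y) := by
  refine hw.induction_on_moves (by simp [encode]) ?_
  intro m t ht hm ih
  rw [m.encode_apply p hm]
  refine ih.append (by cases m <;> simp [Move.emit]) fun l hl y hy =>
    (getLast_encode_le hp ht l hl).trans ?_
  cases m <;> simp [Move.emit] at hy <;> omega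

theorem isStable_iff (hp : 3 ≤ p) (hw : IsAdmissible w) :
    IsStable w ↔ ∀ l ∈ (encode p w).getLast?, p * l < (p - 1) * degW p 2 w := by
  rcases hw.exists_move with rfl | ⟨m, t, ht, hm, rfl⟩
  · simp [IsStable, encode]
  rw [m.encode_apply p hm, m.degW_apply p hm]
  rcases m with _ | _ | _
  · have hst : IsStable (Move.step.apply t) := by
      simp only [Move.apply]; split_ifs <;> simp [IsStable]
    simp only [hst, true_iff, Move.emit, List.append_nil, Move.deg]
    exact fun l hl => (getLast_encode_le (by omega) ht l hl).trans_lt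
      (Nat.mul_lt_mul_of_pos_left (by omega) (by omega))
  · obtain ⟨k, s, rfl | rfl⟩ := hm.resolve_left (by simp) <;>
      simp [Move.apply, IsStable, Move.emit, Move.deg]
    all_goals exact le_of_eq (by ring)
  · have := Move.phiZero_mul_emit_add (by omega : 2 ≤ p) (degW p 2 t)
    simp [Move.apply, IsStable, Move.emit, Move.deg]
    omega

theorem Move.eq_step_of_encode_eq (hp : 2 ≤ p) {m : Move} {t₁ t₂ : List Letter}
    (ht₁ : IsAdmissible t₁) (henc : encode p t₁ = encode p t₂ ++ m.emit p (degW p 2 t₂))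
    (hdeg : degW p 2 t₁ + 1 = m.deg p (degW p 2 t₂)) : m = step := by
  by_contra hm
  obtain ⟨x, hx⟩ : ∃ x, m.emit p (degW p 2 t₂) = [x] := by
    cases m <;> simp_all [emit]
  have hlast := getLast_encode_le hp ht₁ x (by simp [henc, hx])
  have := sub_one_mul_deg_le hp hx
  rw [← hdeg, mul_add_one] at this
  omega

theorem Move.eq_of_encode_apply_eq (hp : 3 ≤ p) {m₁ m₂ : Move} {t₁ t₂ : List Letter}
    (ht₁ : IsAdmissible t₁) (ht₂ : IsAdmissible t₂) (hm₁ : m₁.Legal t₁) (hm₂ : m₂.Legal t₂)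
    (henc : encode p (m₁.apply t₁) = encode p (m₂.apply t₂))
    (hdeg : degW p 2 (m₁.apply t₁) = degW p 2 (m₂.apply t₂)) : m₁ = m₂ := by
  rw [m₁.encode_apply p hm₁, m₂.encode_apply p hm₂] at henc
  rw [m₁.degW_apply p hm₁, m₂.degW_apply p hm₂] at hdeg
  have hp2 : 2 ≤ p := by omega
  have h₁ : m₁ = step → m₂ = step := by
    rintro rfl
    exact eq_step_of_encode_eq hp2 ht₁ (by simpa [emit] using henc) (by simpa [deg] using hdeg)
  have h₂ : m₂ = step → m₁ = step := by
    rintro rfl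
    exact eq_step_of_encode_eq hp2 ht₂ (by simpa [emit] using henc.symm)
      (by simpa [deg] using hdeg.symm)
  cases m₁ <;> cases m₂ <;> simp only [reduceCtorEq, imp_false, not_true_eq_false] at h₁ h₂ ⊢ <;>
    simp only [deg] at hdeg
  · exact Nat.mul_ne_mul_add_two hp _ _ hdeg
  · exact Nat.mul_ne_mul_add_two hp _ _ hdeg.symm

theorem eq_of_encode_eq (hp : 3 ≤ p) {w₁ w₂ : List Letter} (hw₁ : IsAdmissible w₁)
    (hw₂ : IsAdmissible w₂) (hlen : w₁.length = w₂.length) (henc : encode p w₁ = encode p w₂) :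
    w₁ = w₂ := by
  suffices h : ∀ w₂, IsAdmissible w₂ → w₁.length = w₂.length → encode p w₁ = encode p w₂ →
      w₁ = w₂ from h w₂ hw₂ hlen henc
  clear hw₂ hlen henc
  refine hw₁.induction_on_moves (fun w₂ hw₂ hlen _ => (hw₂.eq_singleton_mu hlen.symm).symm) ?_
  intro m t₁ ht₁ hm₁ ih w₂ hw₂ hlen henc
  rcases hw₂.exists_move with rfl | ⟨m₂, t₂, ht₂, hm₂, rfl⟩
  · exact (Move.isAdmissible_apply ht₁ hm₁).eq_singleton_mu hlen
  have hdeg : degW p 2 (m.apply t₁) = degW p 2 (m₂.apply t₂) := by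
    rw [degW_eq_length_add_sum (by omega) (Move.isAdmissible_apply ht₁ hm₁),
      degW_eq_length_add_sum (by omega) hw₂, hlen, henc]
  obtain rfl := Move.eq_of_encode_apply_eq hp ht₁ ht₂ hm₁ hm₂ henc hdeg
  rw [m.encode_apply p hm₁, m.encode_apply p hm₂] at henc
  rw [m.degW_apply p hm₁, m.degW_apply p hm₂] at hdeg
  rw [m.length_apply hm₁, m.length_apply hm₂] at hlen
  rw [m.deg_injective (by omega) hdeg] at henc
  rw [ih t₂ ht₂ (by omega) (List.append_cancel_right henc)]

theorem _root_.IsAdmissible.exists_length_eq_encode_eq (hw : IsAdmissible w) {n : ℕ}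
    (hn : w.length ≤ n) : ∃ w', IsAdmissible w' ∧ w'.length = n ∧ encode p w' = encode p w := by
  induction n, hn using Nat.le_induction with
  | base => exact ⟨w, hw, rfl, rfl⟩
  | succ n _ ih =>
    obtain ⟨w', hw', hlen, henc⟩ := ih
    refine ⟨Move.step.apply w', Move.isAdmissible_apply hw' (Or.inl rfl), ?_, ?_⟩
    · rw [Move.length_apply (Or.inl rfl), hlen, Move.lengthInc]
    · rw [Move.encode_apply p (Or.inl rfl), henc, Move.emit, List.append_nil]

theorem exists_emit_eq_of_isChain_append (hp : 3 ≤ p) {b : List ℕ} {x : ℕ}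
    (hmod : ∀ y ∈ b ++ [x], y % (2 * (p - 1)) = 0 ∨ y % (2 * (p - 1)) = 1)
    (hhead : ∀ h ∈ (b ++ [x]).head?, 4 * (p - 1) ≤ h)
    (hchain : (b ++ [x]).IsChain (fun u v => p * u ≤ v)) :
    ∃ (m : Move) (d : ℕ), Even d ∧ m.emit p d = [x] ∧ b.sum + 4 ≤ d ∧
      ∀ l ∈ b.getLast?, p * l ≤ (p - 1) * d := by
  have hp2 : 2 ≤ p := by omega
  set d := 2 * (x / (2 * (p - 1))) with hd
  have hx : x = (p - 1) * d + x % (2 * (p - 1)) := by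
    have := Nat.div_add_mod x (2 * (p - 1))
    rw [hd, mul_left_comm, ← mul_assoc]
    omega
  have hr := hmod x (by simp)
  obtain ⟨m, hemit⟩ : ∃ m : Move, m.emit p d = [x] := by
    rcases hr with h | h
    · exact ⟨.raise, by rw [Move.emit, hx, h, add_zero]⟩
    · exact ⟨.phiZero, by rw [Move.emit, hx, h]⟩
  refine ⟨m, d, even_two_mul _, hemit, ?_, fun l hl => ?_⟩
  · have hchain_sum := hchain.sub_one_mul_sum_add_headD_le (by omega)
    have hhead' := hhead (b.headD x) (by cases b <;> simp)
    refine Nat.le_of_sub_one_mul_le_add hp2 ?_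
    rw [mul_add]
    omega
  · have hle : p * l ≤ x := (List.isChain_append.1 hchain).2.2 l hl x (by simp)
    have hne := Nat.mul_mod_sub_one_ne_one hp
      (hmod l (List.mem_append_left _ (List.mem_of_getLast? hl)))
    rcases hr with h | h
    · omega
    · have : p * l ≠ x := fun e => hne (e ▸ h)
      omega

theorem exists_encode_eq (hp : 3 ≤ p) (a : List ℕ) {n : ℕ} (hn : 1 ≤ n)
    (hmod : ∀ x ∈ a, x % (2 * (p - 1)) = 0 ∨ x % (2 * (p - 1)) = 1)
    (hhead : ∀ h ∈ a.head?, 4 * (p - 1) ≤ h) (hchain : a.IsChain (fun x y => p * x ≤ y))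
    (hlast : ∀ l ∈ a.getLast?, p * l ≤ (p - 1) * (n + 1 + a.sum)) :
    ∃ w, IsAdmissible w ∧ w.length = n ∧ encode p w = a := by
  induction a using List.reverseRecOn generalizing n with
  | nil =>
    have hmu : IsAdmissible [mu] := by simp [isAdmissible_cons]
    simpa [encode] using hmu.exists_length_eq_encode_eq (p := p) hn
  | append_singleton b x ih =>
    have hp2 : 2 ≤ p := by omega
    obtain ⟨m, d, hd, hemit, hsum, hb_last⟩ :=
      exists_emit_eq_of_isChain_append hp hmod hhead hchain
    obtain ⟨t, ht, htlen, htenc⟩ := ih (n := d - 1 - b.sum) (by omega)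
      (fun y hy => hmod y (List.mem_append_left _ hy))
      (fun y hy => hhead y (by simp [List.head?_append, Option.mem_def.1 hy]))
      hchain.left_of_append
      (by rwa [show d - 1 - b.sum + 1 + b.sum = d by omega])
    have htdeg : degW p 2 t = d := by
      rw [degW_eq_length_add_sum (by omega) ht, htlen, htenc]
      omega
    have hlegal : m.Legal t :=
      Or.inr (startsWithPower_of_even_degW ht (by omega) (htdeg ▸ hd))
    have hmt := Move.isAdmissible_apply ht hlegal
    have hmt_enc : encode p (m.apply t) = b ++ [x] := by
      rw [m.encode_apply p hlegal, htenc, htdeg, hemit]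
    suffices hlen : (m.apply t).length ≤ n by
      simpa [hmt_enc] using hmt.exists_length_eq_encode_eq (p := p) hlen
    have hdeg := degW_eq_length_add_sum (p := p) (by omega) hmt
    rw [m.degW_apply p hlegal, htdeg, hmt_enc] at hdeg
    have hbound := m.sub_one_mul_deg_le hp2 hemit
    have hxlast := hlast x (by simp)
    have : m.deg p d ≤ n + 1 + (b ++ [x]).sum := Nat.le_of_sub_one_mul_le_add hp2 (by omega)
    omega

def IsAdmissibleSeq (p n : ℕ) (a : List ℕ) : Prop :=
  (∀ i ∈ a, 0 < i) ∧
    (∀ i ∈ a, i % (2 * p - 2) = 0 ∨ i % (2 * p - 2) = 1) ∧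
    (∀ h, a.head? = some h → 4 * (p - 1) ≤ h) ∧
    a.IsChain (fun x y => p * x ≤ y) ∧
    (∀ l, a.getLast? = some l → p * l < (p - 1) * (n + 1 + a.sum))

theorem isAdmissibleSeq_encode (hp : 3 ≤ p) (hw : IsAdmissible w) (hst : IsStable w) :
    IsAdmissibleSeq p w.length (encode p w) := by
  have hp' : 2 * p - 2 = 2 * (p - 1) := by omega
  refine ⟨fun i hi => ?_, fun i hi => hp' ▸ mod_of_mem_encode (by omega) hw hi,
    fun h hh => four_mul_le_of_mem_encode (by omega) hw (List.mem_of_mem_head? hh),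
    isChain_encode (by omega) hw, ?_⟩
  · have := four_mul_le_of_mem_encode (by omega) hw hi
    omega
  · rw [← degW_eq_length_add_sum (by omega) hw]
    exact (isStable_iff hp hw).1 hst

theorem exists_isStable_encode_eq (hp : 3 ≤ p) {n : ℕ} (hn : 1 ≤ n) {a : List ℕ}
    (ha : IsAdmissibleSeq p n a) :
    ∃ w, IsAdmissible w ∧ IsStable w ∧ w.length = n ∧ encode p w = a := by
  obtain ⟨-, hmod, hhead, hchain, hlast⟩ := ha
  have hp' : 2 * p - 2 = 2 * (p - 1) := by omega
  obtain ⟨w, hw, hlen, rfl⟩ := exists_encode_eq hp a hn (hp' ▸ hmod) hhead hchain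
    fun l hl => (hlast l hl).le
  refine ⟨w, hw, (isStable_iff hp hw).2 ?_, hlen, rfl⟩
  rwa [degW_eq_length_add_sum (by omega) hw, hlen]

end AdmissibleWord

theorem statement1 (p n : ℕ) (hp : p.Prime) (hpodd : Odd p) (hn : 2 ≤ n) :
    ∃ e : {w : List Letter // IsAdmissible w ∧ IsStable w ∧ w.length = n} ≃
        {a : List ℕ //
          (∀ i ∈ a, 0 < i) ∧
          (∀ i ∈ a, i % (2 * p - 2) = 0 ∨ i % (2 * p - 2) = 1) ∧
          (∀ h, a.head? = some h → 4 * (p - 1) ≤ h) ∧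
          a.Chain' (fun x y => p * x ≤ y) ∧
          (∀ l, a.getLast? = some l → p * l < (p - 1) * (n + 1 + a.sum))},
      ∀ w, degW p 2 w.val = n + 1 + (e w).val.sum := by
  have hp3 : 3 ≤ p :=
    hp.two_le.lt_of_ne (by rintro rfl; exact Nat.not_odd_iff_even.2 even_two hpodd)
  let toSeq (w : {w : List Letter // IsAdmissible w ∧ IsStable w ∧ w.length = n}) :
      {a : List ℕ // AdmissibleWord.IsAdmissibleSeq p n a} :=
    ⟨AdmissibleWord.encode p w.1, by
      simpa [w.2.2.2] using AdmissibleWord.isAdmissibleSeq_encode hp3 w.2.1 w.2.2.1⟩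
  have hinj : Function.Injective toSeq := fun w₁ w₂ h =>
    Subtype.ext <| AdmissibleWord.eq_of_encode_eq hp3 w₁.2.1 w₂.2.1
      (w₁.2.2.2.trans w₂.2.2.2.symm) (congrArg Subtype.val h)
  have hsurj : Function.Surjective toSeq := fun a => by
    obtain ⟨w, hw, hst, hlen, henc⟩ :=
      AdmissibleWord.exists_isStable_encode_eq hp3 (by omega) a.2
    exact ⟨⟨w, hw, hst, hlen⟩, Subtype.ext henc⟩
  exact ⟨Equiv.ofBijective toSeq ⟨hinj, hsurj⟩, fun w => by
    rw [AdmissibleWord.degW_eq_length_add_sum (by omega) w.2.1, w.2.2.2]; rfl⟩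
end

section
/- Let p be an odd prime and m ≥ 1 an integer. Then there exists N such that for all n ≥ N, the number of stable admissible words of length n and degree n + m is equal to the number of sequences (a_1, ..., a_k) of positive integers with k ≥ 0 (the empty sequence allowed) such that each a_i is congruent to 0 or 1 modulo 2p−2, a_1 ≥ 4(p−1), a_{i+1} ≥ p·a_i for 1 ≤ i ≤ k−1, and 1 + a_1 + ... + a_k = m. -/
open Letter

namespace Word

def StartsWithRhoOrPhi (w : List Letter) : Prop :=
  ∃ j, w.head? = some (rho j) ∨ w.head? = some (phi j)

inductive Admissible : List Letter → Prop
  | base : Admissible [mu]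
  | cons_sigma {w} : Admissible w → w.head? ≠ some sigma → Admissible (sigma :: w)
  | cons_rho {w} : Admissible w → w.head? = some sigma → Admissible (rho 0 :: w)
  | cons_phi {w} : Admissible w → StartsWithRhoOrPhi w → Admissible (phi 0 :: w)
  | rho_succ {k w} : Admissible (rho k :: w) → Admissible (rho (k + 1) :: w)
  | phi_succ {k w} : Admissible (phi k :: w) → Admissible (phi (k + 1) :: w)

variable {p : ℕ} {w : List Letter}

namespace Admissible

theorem ne_nil (h : Admissible w) : w ≠ [] := by
  cases h <;> simp

theorem rho_pow (h : Admissible w) (hh : w.head? = some sigma) :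
    ∀ k, Admissible (rho k :: w)
  | 0 => .cons_rho h hh
  | k + 1 => .rho_succ (rho_pow h hh k)

theorem phi_pow (h : Admissible w) (hh : StartsWithRhoOrPhi w) : ∀ k, Admissible (phi k :: w)
  | 0 => .cons_phi h hh
  | k + 1 => .phi_succ (phi_pow h hh k)

end Admissible

theorem isAdmissible_singleton {l : Letter} : IsAdmissible [l] ↔ l = mu := by
  change _ ∧ _ ∧ List.IsChain _ _ ↔ _
  simp

theorem isAdmissible_cons_cons {l b : Letter} {t : List Letter} :
    IsAdmissible (l :: b :: t) ↔ allowedPair l b ∧ IsAdmissible (b :: t) := by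
  change _ ∧ _ ∧ List.IsChain _ _ ↔ _ ∧ _ ∧ _ ∧ List.IsChain _ _
  simp [and_left_comm]

theorem Admissible.isAdmissible (h : Admissible w) : IsAdmissible w := by
  induction h with
  | base => exact isAdmissible_singleton.2 rfl
  | cons_sigma hw _ ih | cons_rho hw _ ih | cons_phi hw _ ih =>
    obtain ⟨b, t, rfl⟩ := List.exists_cons_of_ne_nil hw.ne_nil
    refine isAdmissible_cons_cons.2 ⟨?_, ih⟩
    cases b <;> simp_all [allowedPair, StartsWithRhoOrPhi]
  | @rho_succ _ w _ ih | @phi_succ _ w _ ih =>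
    cases w with
    | nil => simp [isAdmissible_singleton] at ih
    | cons b t =>
      rw [isAdmissible_cons_cons] at ih ⊢
      exact ⟨by cases b <;> simp_all [allowedPair], ih.2⟩

theorem admissible_of_isAdmissible : ∀ {w : List Letter}, IsAdmissible w → Admissible w
  | [], h => absurd rfl h.1
  | [_], h => isAdmissible_singleton.1 h ▸ .base
  | l :: b :: t, h => by
    obtain ⟨hlb, ht⟩ := isAdmissible_cons_cons.1 h
    have hbt := admissible_of_isAdmissible ht
    cases l with
    | mu => cases b <;> simp [allowedPair] at hlb
    | sigma => exact .cons_sigma hbt (by cases b <;> simp_all [allowedPair])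
    | rho k => exact hbt.rho_pow (by cases b <;> simp_all [allowedPair]) k
    | phi k => exact hbt.phi_pow (by cases b <;> simp_all [allowedPair, StartsWithRhoOrPhi]) k

theorem degW_rho_succ (p g k : ℕ) (w : List Letter) :
    degW p g (rho (k + 1) :: w) = p * degW p g (rho k :: w) := by
  simp only [degW, pow_succ]; ring

theorem degW_phi_succ (p g k : ℕ) (w : List Letter) :
    degW p g (phi (k + 1) :: w) = p * degW p g (phi k :: w) := by
  simp only [degW, pow_succ]; ring

theorem StartsWithRhoOrPhi.head_ne_sigma (hh : StartsWithRhoOrPhi w) :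
    w.head? ≠ some sigma := by
  obtain ⟨j, hj | hj⟩ := hh <;> simp [hj]

theorem Admissible.even_degW_iff (hp : Odd p) (h : Admissible w) :
    Even (degW p 2 w) ↔ w.head? ≠ some sigma := by
  have hpow : ∀ x, Even (p * x) ↔ Even x := fun x => by
    simp [Nat.even_mul, Nat.not_even_iff_odd.2 hp]
  induction h with
  | base => simp [degW]
  | cons_sigma _ hh ih =>
    simpa [degW, Nat.even_add_one, parity_simps] using ih.2 hh
  | cons_rho _ hh ih =>
    simpa [degW, Nat.even_add_one, parity_simps, hh] using ih
  | cons_phi _ hh ih =>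
    simpa [degW, parity_simps, hpow] using ih.2 hh.head_ne_sigma
  | rho_succ _ ih | phi_succ _ ih =>
    simpa [degW_rho_succ, degW_phi_succ, hpow] using ih

def decode (p : ℕ) : List Letter → List ℕ
  | [] => []
  | mu :: _ => []
  | sigma :: w => decode p w
  | rho 0 :: w => decode p w
  | rho (k + 1) :: w => decode p (rho k :: w) ++ [(p - 1) * degW p 2 (rho k :: w)]
  | phi 0 :: w => decode p w ++ [1 + (p - 1) * degW p 2 w]
  | phi (k + 1) :: w => decode p (phi k :: w) ++ [(p - 1) * degW p 2 (phi k :: w)]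

theorem mul_mod_two_mul_of_even (q : ℕ) {d : ℕ} (hd : Even d) : q * d % (2 * q) = 0 := by
  obtain ⟨e, rfl⟩ := hd
  rw [show q * (e + e) = 2 * q * e by ring, Nat.mul_mod_right]

theorem one_add_mul_mod_two_mul_of_even {q d : ℕ} (hq : 2 ≤ q) (hd : Even d) :
    (1 + q * d) % (2 * q) = 1 := by
  obtain ⟨e, rfl⟩ := hd
  rw [show 1 + q * (e + e) = 1 + 2 * q * e by ring, Nat.add_mul_mod_self_left,
    Nat.mod_eq_of_lt (by omega)]

theorem mem_head?_append_singleton {α : Type*} {l : List α} {x y : α}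
    (h : x ∈ (l ++ [y]).head?) : x ∈ l.head? ∨ x = y := by
  cases l <;> simp_all

theorem isChain_append_singleton {α : Type*} {R : α → α → Prop} {l : List α} {y : α} :
    (l ++ [y]).IsChain R ↔ l.IsChain R ∧ ∀ x ∈ l.getLast?, R x y := by
  simp [List.isChain_append]

namespace Admissible

theorem degW_eq (hp : 1 ≤ p) (h : Admissible w) :
    degW p 2 w = w.length + 1 + (decode p w).sum := by
  obtain ⟨q, rfl⟩ : ∃ q, p = q + 1 := ⟨p - 1, by omega⟩
  induction h with
  | base => simp [degW, decode]
  | cons_sigma _ _ ih | cons_rho _ _ ih =>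
    simp only [degW, decode, pow_zero, one_mul, List.length_cons, ih]; ring
  | cons_phi _ _ ih => simp only [degW, decode, pow_zero, one_mul, List.length_cons,
      List.sum_append, List.sum_singleton, Nat.add_sub_cancel, ih]; ring
  | rho_succ _ ih | phi_succ _ ih =>
    simp only [degW_rho_succ, degW_phi_succ, decode, List.length_cons, List.sum_append,
      List.sum_singleton, Nat.add_sub_cancel] at ih ⊢
    rw [ih]; ring

theorem length_add_one_le_degW (hp : 1 ≤ p) (h : Admissible w) :
    w.length + 1 ≤ degW p 2 w := by
  rw [h.degW_eq hp]; omega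

theorem three_le_degW (hp : 1 ≤ p) (h : Admissible w) (hmu : w.head? ≠ some mu) :
    3 ≤ degW p 2 w := by
  induction h with
  | base => simp at hmu
  | @cons_sigma v hv _ _ | @cons_rho v hv _ _ =>
    have := hv.length_add_one_le_degW hp
    have := List.length_pos_iff.2 hv.ne_nil
    simp only [degW, pow_zero, one_mul]; omega
  | @cons_phi v hv _ _ =>
    have := hv.length_add_one_le_degW hp
    have := List.length_pos_iff.2 hv.ne_nil
    simp only [degW, pow_zero, one_mul]; nlinarith
  | rho_succ _ ih | phi_succ _ ih =>
    simp only [degW_rho_succ, degW_phi_succ]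
    nlinarith [ih (by simp)]

theorem four_le_degW (hp : 1 ≤ p) (h : Admissible w) (hh : StartsWithRhoOrPhi w) :
    4 ≤ degW p 2 w := by
  induction h with
  | base | cons_sigma => simp [StartsWithRhoOrPhi] at hh
  | cons_rho hv hσ =>
    have := hv.three_le_degW hp (by simp [hσ])
    simp only [degW, pow_zero, one_mul]; omega
  | cons_phi hv =>
    have := hv.length_add_one_le_degW hp
    have := List.length_pos_iff.2 hv.ne_nil
    simp only [degW, pow_zero, one_mul]; nlinarith
  | rho_succ _ ih | phi_succ _ ih =>
    simp only [degW_rho_succ, degW_phi_succ]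
    nlinarith [ih (by simp [StartsWithRhoOrPhi])]

theorem pos_of_mem_decode (hp : 2 ≤ p) (h : Admissible w) : ∀ x ∈ decode p w, 0 < x := by
  induction h with
  | base => simp [decode]
  | cons_sigma _ _ ih | cons_rho _ _ ih => simpa [decode] using ih
  | cons_phi _ _ ih =>
    simp only [decode, List.mem_append, List.mem_singleton]
    rintro x (hx | rfl)
    exacts [ih x hx, by omega]
  | @rho_succ k v hv ih | @phi_succ k v hv ih =>
    simp only [decode, List.mem_append, List.mem_singleton]
    rintro x (hx | rfl)
    · exact ih x hx
    · have := hv.length_add_one_le_degW (p := p) (by omega)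
      exact Nat.mul_pos (by omega) (by omega)

theorem mod_of_mem_decode (hp : 3 ≤ p) (hodd : Odd p) (h : Admissible w) :
    ∀ x ∈ decode p w, x % (2 * (p - 1)) = 0 ∨ x % (2 * (p - 1)) = 1 := by
  induction h with
  | base => simp [decode]
  | cons_sigma _ _ ih | cons_rho _ _ ih => simpa [decode] using ih
  | cons_phi hv hh ih =>
    simp only [decode, List.mem_append, List.mem_singleton]
    rintro x (hx | rfl)
    · exact ih x hx
    · exact .inr (one_add_mul_mod_two_mul_of_even (by omega)
        ((hv.even_degW_iff hodd).2 hh.head_ne_sigma))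
  | rho_succ hv ih | phi_succ hv ih =>
    simp only [decode, List.mem_append, List.mem_singleton]
    rintro x (hx | rfl)
    · exact ih x hx
    · exact .inl (mul_mod_two_mul_of_even _ ((hv.even_degW_iff hodd).2 (by simp)))

theorem le_of_mem_head?_decode (hp : 2 ≤ p) (h : Admissible w) :
    ∀ x ∈ (decode p w).head?, 4 * (p - 1) ≤ x := by
  induction h with
  | base => simp [decode]
  | cons_sigma _ _ ih | cons_rho _ _ ih => simpa [decode] using ih
  | cons_phi hv hh ih =>
    intro x hx
    simp only [decode] at hx
    rcases mem_head?_append_singleton hx with hx | rfl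
    · exact ih x hx
    · have := hv.four_le_degW (p := p) (by omega) hh
      nlinarith
  | rho_succ hv ih | phi_succ hv ih =>
    intro x hx
    simp only [decode] at hx
    rcases mem_head?_append_singleton hx with hx | rfl
    · exact ih x hx
    · have := hv.four_le_degW (p := p) (by omega) (by simp [StartsWithRhoOrPhi])
      nlinarith

theorem mul_le_of_mem_getLast?_decode (hp : 2 ≤ p) (h : Admissible w) :
    ∀ x ∈ (decode p w).getLast?, p * x ≤ (p - 1) * degW p 2 w := by
  induction h with
  | base => simp [decode]
  | cons_sigma _ _ ih | cons_rho _ _ ih =>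
    intro x hx
    simp only [decode, degW, pow_zero, one_mul] at hx ⊢
    exact (ih x hx).trans (Nat.mul_le_mul_left _ (by omega))
  | cons_phi =>
    simp only [decode, List.getLast?_concat, Option.mem_def, Option.some.injEq]
    rintro x rfl
    obtain ⟨q, rfl⟩ : ∃ q, p = q + 1 := ⟨p - 1, by omega⟩
    simp only [degW, pow_zero, one_mul, Nat.add_sub_cancel]
    nlinarith
  | rho_succ | phi_succ =>
    simp only [decode, List.getLast?_concat, Option.mem_def, Option.some.injEq]
    rintro x rfl
    simp only [degW_rho_succ, degW_phi_succ]
    exact le_of_eq (by ring)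

theorem isChain_decode (hp : 2 ≤ p) (h : Admissible w) :
    (decode p w).IsChain (fun x y => p * x ≤ y) := by
  induction h with
  | base => simp [decode]
  | cons_sigma _ _ ih | cons_rho _ _ ih => simpa [decode] using ih
  | cons_phi hv _ ih =>
    simp only [decode]
    refine isChain_append_singleton.2 ⟨ih, fun x hx => ?_⟩
    exact (hv.mul_le_of_mem_getLast?_decode hp x hx).trans (by omega)
  | rho_succ hv ih | phi_succ hv ih =>
    simp only [decode]
    exact isChain_append_singleton.2 ⟨ih, hv.mul_le_of_mem_getLast?_decode hp⟩

end Admissible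

def pad : ℕ → List Letter → List Letter
  | 0, w => w
  | j + 1, w => (if (pad j w).head? = some sigma then rho 0 else sigma) :: pad j w

def core : List Letter → List Letter
  | sigma :: w => core w
  | rho 0 :: w => core w
  | w => w

def IsCore (w : List Letter) : Prop :=
  w = [mu] ∨ (∃ k t, w = rho (k + 1) :: t) ∨ ∃ k t, w = phi k :: t

theorem degW_pad (p g j : ℕ) (w : List Letter) : degW p g (pad j w) = degW p g w + j := by
  induction j with
  | zero => rfl
  | succ j ih => simp only [pad]; split <;> simp [degW, ih] <;> omega

theorem length_pad (j : ℕ) (w : List Letter) : (pad j w).length = w.length + j := by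
  induction j with
  | zero => rfl
  | succ j ih => simp [pad, ih]; omega

theorem decode_pad (p j : ℕ) (w : List Letter) : decode p (pad j w) = decode p w := by
  induction j with
  | zero => rfl
  | succ j ih => simp only [pad]; split <;> simp [decode, ih]

theorem admissible_pad (h : Admissible w) (j : ℕ) : Admissible (pad j w) := by
  induction j with
  | zero => exact h
  | succ j ih =>
    simp only [pad]; split
    · exact .cons_rho ih (by assumption)
    · exact .cons_sigma ih (by assumption)

theorem head_pad (hw : w.head? ≠ some sigma) (j : ℕ) :
    (pad (j + 1) w).head? = some (if Even j then sigma else rho 0) := by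
  induction j with
  | zero => simp [pad, hw]
  | succ j ih =>
    rw [pad, ih]
    by_cases hj : Even j <;> simp [hj, Nat.even_add_one]

theorem IsCore.head_ne_sigma (hc : IsCore w) : w.head? ≠ some sigma := by
  rcases hc with rfl | ⟨k, t, rfl⟩ | ⟨k, t, rfl⟩ <;> simp

namespace Admissible

theorem isCore_core (h : Admissible w) : IsCore (core w) := by
  induction h with
  | base => exact .inl rfl
  | cons_sigma _ _ ih | cons_rho _ _ ih => exact ih
  | cons_phi => exact .inr (.inr ⟨0, _, rfl⟩)
  | rho_succ => exact .inr (.inl ⟨_, _, rfl⟩)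
  | phi_succ => exact .inr (.inr ⟨_, _, rfl⟩)

theorem admissible_core (h : Admissible w) : Admissible (core w) := by
  induction h with
  | cons_sigma _ _ ih | cons_rho _ _ ih => exact ih
  | base | cons_phi | rho_succ | phi_succ => constructor <;> assumption

theorem exists_pad_core (h : Admissible w) : ∃ j, pad j (core w) = w := by
  induction h with
  | cons_sigma _ hh ih =>
    obtain ⟨j, hj⟩ := ih
    exact ⟨j + 1, by simp [pad, hj, core, hh]⟩
  | cons_rho _ hh ih =>
    obtain ⟨j, hj⟩ := ih
    exact ⟨j + 1, by simp [pad, hj, core, hh]⟩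
  | base | cons_phi | rho_succ | phi_succ => exact ⟨0, rfl⟩

theorem two_mul_length_le_degW (hp : 2 ≤ p) (h : Admissible w) (hc : IsCore w) :
    2 * w.length ≤ degW p 2 w := by
  cases h with
  | base => simp [degW]
  | cons_sigma | cons_rho => simp [IsCore] at hc
  | cons_phi hv =>
    have := hv.length_add_one_le_degW (p := p) (by omega)
    simp only [degW, pow_zero, one_mul, List.length_cons]; nlinarith
  | rho_succ hv | phi_succ hv =>
    have := hv.length_add_one_le_degW (p := p) (by omega)
    simp only [degW_rho_succ, degW_phi_succ, List.length_cons] at this ⊢; nlinarith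

end Admissible

def bump : List Letter → List Letter
  | rho k :: t => rho (k + 1) :: t
  | phi k :: t => phi (k + 1) :: t
  | w => w

def extend (p : ℕ) (w : List Letter) (a : ℕ) : List Letter :=
  if a = (p - 1) * degW p 2 w then bump w
  else if a % (2 * (p - 1)) = 0 then rho 1 :: pad (a / (p - 1) - 1 - degW p 2 w) w
  else phi 0 :: pad (a / (p - 1) - degW p 2 w) w

def encode (p : ℕ) (a : List ℕ) : List Letter := a.foldl (extend p) [mu]

theorem encode_append_singleton (p : ℕ) (a : List ℕ) (x : ℕ) :
    encode p (a ++ [x]) = extend p (encode p a) x :=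
  List.foldl_concat ..

theorem extend_self (p : ℕ) (w : List Letter) :
    extend p w ((p - 1) * degW p 2 w) = bump w :=
  if_pos rfl

theorem extend_rho (hp : 2 ≤ p) {d : ℕ} (hd : Odd d) (hw : degW p 2 w ≤ d) :
    extend p w ((p - 1) * (d + 1)) = rho 1 :: pad (d - degW p 2 w) w := by
  have hne : (p - 1) * (d + 1) ≠ (p - 1) * degW p 2 w :=
    fun h => by have := Nat.eq_of_mul_eq_mul_left (by omega) h; omega
  rw [extend, if_neg hne, if_pos (mul_mod_two_mul_of_even _ (by simpa [Nat.even_add_one])),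
    Nat.mul_div_cancel_left _ (by omega)]
  congr 2

theorem extend_phi (hp : 3 ≤ p) {d : ℕ} (hd : Even d) (hw : Even (degW p 2 w)) :
    extend p w (1 + (p - 1) * d) = phi 0 :: pad (d - degW p 2 w) w := by
  have hmod := one_add_mul_mod_two_mul_of_even (q := p - 1) (by omega) hd
  have hne : 1 + (p - 1) * d ≠ (p - 1) * degW p 2 w :=
    fun h => by rw [h, mul_mod_two_mul_of_even _ hw] at hmod; omega
  rw [extend, if_neg hne, if_neg (by omega), Nat.add_mul_div_left _ _ (by omega),
    Nat.div_eq_of_lt (by omega), zero_add]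

theorem decode_rho_one (p : ℕ) (w : List Letter) :
    decode p (rho 1 :: w) = decode p w ++ [(p - 1) * (1 + degW p 2 w)] := by
  simp [decode, degW]

namespace Admissible

theorem extend_core_rho (hp : 2 ≤ p) (hodd : Odd p) (h : Admissible w)
    (hσ : w.head? = some sigma) :
    extend p (core w) ((p - 1) * degW p 2 (rho 0 :: w)) = rho 1 :: w := by
  obtain ⟨j, hj⟩ := h.exists_pad_core
  have hdeg := degW_pad p 2 j (core w)
  rw [hj] at hdeg
  have hodd_w : Odd (degW p 2 w) := by
    simpa [Nat.not_even_iff_odd, hσ] using (h.even_degW_iff hodd).not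
  rw [show degW p 2 (rho 0 :: w) = degW p 2 w + 1 by simp [degW, add_comm],
    extend_rho hp hodd_w (by omega), show degW p 2 w - degW p 2 (core w) = j by omega, hj]

theorem extend_core_phi (hp : 3 ≤ p) (hodd : Odd p) (h : Admissible w)
    (hh : StartsWithRhoOrPhi w) :
    extend p (core w) (1 + (p - 1) * degW p 2 w) = phi 0 :: w := by
  obtain ⟨j, hj⟩ := h.exists_pad_core
  have hdeg := degW_pad p 2 j (core w)
  rw [hj] at hdeg
  rw [extend_phi hp ((h.even_degW_iff hodd).2 hh.head_ne_sigma)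
      ((h.admissible_core.even_degW_iff hodd).2 h.isCore_core.head_ne_sigma),
    show degW p 2 w - degW p 2 (core w) = j by omega, hj]

theorem encode_decode (hp : 3 ≤ p) (hodd : Odd p) (h : Admissible w) :
    encode p (decode p w) = core w := by
  induction h with
  | base => simp [decode, encode, core]
  | cons_sigma _ _ ih | cons_rho _ _ ih => simpa [decode, core] using ih
  | cons_phi hv hh ih =>
    simp only [decode]
    rw [encode_append_singleton, ih]
    exact hv.extend_core_phi hp hodd hh
  | @rho_succ k v hv ih =>
    simp only [decode]
    rw [encode_append_singleton, ih]
    cases k with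
    | zero => cases hv with
      | cons_rho hv hσ => exact hv.extend_core_rho (by omega) hodd hσ
    | succ k => exact extend_self ..
  | phi_succ _ ih =>
    simp only [decode]
    rw [encode_append_singleton, ih]
    exact extend_self ..

end Admissible

theorem exists_eq_mul_add_of_mod_eq {a c r : ℕ} (h : a % c = r) : ∃ s, a = c * s + r :=
  ⟨a / c, by rw [← h, Nat.div_add_mod]⟩

theorem le_of_mul_le_mul_add_of_lt {c e s r : ℕ} (h : c * e ≤ c * s + r) (hr : r < c) :
    e ≤ s :=
  Nat.lt_succ_iff.1 (Nat.lt_of_mul_lt_mul_left (a := c) (by rw [Nat.mul_succ]; omega))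

def IsCoreExtension (p : ℕ) (w : List Letter) (a : ℕ) : Prop :=
  Admissible (extend p w a) ∧ IsCore (extend p w a) ∧
    decode p (extend p w a) = decode p w ++ [a]

namespace Admissible

theorem isCoreExtension_rho (hp : 3 ≤ p) (hodd : Odd p) (h : Admissible w)
    (hσ : w.head? ≠ some sigma) {d : ℕ} (hd : Odd d) (hlt : degW p 2 w < d) :
    IsCoreExtension p w ((p - 1) * (d + 1)) := by
  obtain ⟨e, he⟩ := (h.even_degW_iff hodd).2 hσ
  obtain ⟨i, rfl⟩ := hd
  have hhead := head_pad hσ (2 * (i - e))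
  rw [if_pos (even_two_mul _)] at hhead
  rw [IsCoreExtension, extend_rho (by omega) ⟨i, rfl⟩ hlt.le,
    show 2 * i + 1 - degW p 2 w = 2 * (i - e) + 1 by omega]
  refine ⟨.rho_succ (.cons_rho (admissible_pad h _) hhead), .inr (.inl ⟨0, _, rfl⟩), ?_⟩
  rw [decode_rho_one, decode_pad, degW_pad]
  congr 3; omega

theorem isCoreExtension_phi (hp : 3 ≤ p) (hodd : Odd p) (h : Admissible w)
    (hσ : w.head? ≠ some sigma) {d : ℕ} (hd : Even d) (hle : degW p 2 w ≤ d)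
    (hpow : degW p 2 w = d → StartsWithRhoOrPhi w) :
    IsCoreExtension p w (1 + (p - 1) * d) := by
  have hD := (h.even_degW_iff hodd).2 hσ
  have hhead : StartsWithRhoOrPhi (pad (d - degW p 2 w) w) := by
    obtain ⟨e, he⟩ := hD
    obtain ⟨i, rfl⟩ := hd
    rcases Nat.eq_zero_or_pos (i + i - degW p 2 w) with h0 | hpos
    · rw [h0]; exact hpow (by omega)
    · refine ⟨0, .inl ?_⟩
      rw [show i + i - degW p 2 w = 2 * (i - e) - 1 + 1 by omega, head_pad hσ,
        if_neg (Nat.not_even_iff_odd.2 ⟨i - e - 1, by omega⟩)]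
  rw [IsCoreExtension, extend_phi hp hd hD]
  refine ⟨.cons_phi (admissible_pad h _) hhead, .inr (.inr ⟨0, _, rfl⟩), ?_⟩
  rw [decode, decode_pad, degW_pad]
  congr 4; omega

theorem isCoreExtension_bump (h : Admissible w) (hc : IsCore w) (hmu : w ≠ [mu]) :
    IsCoreExtension p w ((p - 1) * degW p 2 w) := by
  rw [IsCoreExtension, extend_self]
  rcases hc with rfl | ⟨k, t, rfl⟩ | ⟨k, t, rfl⟩
  · exact absurd rfl hmu
  · exact ⟨h.rho_succ, .inr (.inl ⟨_, _, rfl⟩), by rw [bump, decode]⟩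
  · exact ⟨h.phi_succ, .inr (.inr ⟨_, _, rfl⟩), by rw [bump, decode]⟩

end Admissible

theorem IsCore.startsWithRhoOrPhi (hc : IsCore w) (hmu : w ≠ [mu]) : StartsWithRhoOrPhi w := by
  rcases hc with rfl | ⟨k, t, rfl⟩ | ⟨k, t, rfl⟩
  exacts [absurd rfl hmu, ⟨_, .inl rfl⟩, ⟨_, .inr rfl⟩]

theorem IsCore.exists_mem_getLast?_decode (hp : 2 ≤ p) (hc : IsCore w) (hmu : w ≠ [mu]) :
    ∃ x ∈ (decode p w).getLast?, (p - 1) * degW p 2 w ≤ p * x + (p - 2) := by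
  rcases hc with rfl | ⟨k, t, rfl⟩ | ⟨_ | k, t, rfl⟩
  · exact absurd rfl hmu
  · refine ⟨(p - 1) * degW p 2 (rho k :: t), by simp [decode], ?_⟩
    rw [degW_rho_succ]; nlinarith
  · refine ⟨1 + (p - 1) * degW p 2 t, by simp [decode], ?_⟩
    obtain ⟨q, rfl⟩ : ∃ q, p = q + 2 := ⟨p - 2, by omega⟩
    simp only [degW, pow_zero, one_mul, Nat.add_sub_cancel, show q + 2 - 1 = q + 1 from rfl]
    nlinarith
  · refine ⟨(p - 1) * degW p 2 (phi k :: t), by simp [decode], ?_⟩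
    rw [degW_phi_succ]; nlinarith

theorem isCoreExtension_base (hp : 3 ≤ p) (hodd : Odd p) {a : ℕ}
    (hres : a % (2 * (p - 1)) = 0 ∨ a % (2 * (p - 1)) = 1) (ha : 4 * (p - 1) ≤ a) :
    IsCoreExtension p [mu] a := by
  have hdeg : degW p 2 [mu] = 2 := rfl
  have hσ : ([mu] : List Letter).head? ≠ some sigma := by simp
  rcases hres with hr | hr <;> obtain ⟨s, rfl⟩ := exists_eq_mul_add_of_mod_eq hr
  · have hs : 2 ≤ s := le_of_mul_le_mul_add_of_lt (c := 2 * (p - 1)) (r := 0) (by linarith)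
      (by omega)
    obtain ⟨t, rfl⟩ : ∃ t, s = t + 1 := ⟨s - 1, by omega⟩
    rw [show 2 * (p - 1) * (t + 1) + 0 = (p - 1) * (2 * t + 1 + 1) by ring]
    exact Admissible.base.isCoreExtension_rho hp hodd hσ ⟨t, rfl⟩ (by omega)
  · have hs : 2 ≤ s := le_of_mul_le_mul_add_of_lt (c := 2 * (p - 1)) (r := 1) (by linarith)
      (by omega)
    rw [show 2 * (p - 1) * s + 1 = 1 + (p - 1) * (2 * s) by ring]
    exact Admissible.base.isCoreExtension_phi hp hodd hσ (even_two_mul s) (by omega)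
      (fun _ => by omega)

theorem Admissible.isCoreExtension (hp : 3 ≤ p) (hodd : Odd p) (h : Admissible w)
    (hc : IsCore w) {a : ℕ} (hres : a % (2 * (p - 1)) = 0 ∨ a % (2 * (p - 1)) = 1)
    (hlast : ∀ x ∈ (decode p w).getLast?, p * x ≤ a)
    (hfirst : decode p w = [] → 4 * (p - 1) ≤ a) :
    IsCoreExtension p w a := by
  by_cases hmu : w = [mu]
  · subst hmu
    exact isCoreExtension_base hp hodd hres (hfirst (by simp [decode]))
  obtain ⟨x, hx, hlow⟩ := hc.exists_mem_getLast?_decode (p := p) (by omega) hmu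
  have hle : (p - 1) * degW p 2 w ≤ a + (p - 2) := hlow.trans (by linarith [hlast x hx])
  obtain ⟨e, he⟩ := (h.even_degW_iff hodd).2 hc.head_ne_sigma
  rw [he, show (p - 1) * (e + e) = 2 * (p - 1) * e by ring] at hle
  rcases hres with hr | hr <;> obtain ⟨s, rfl⟩ := exists_eq_mul_add_of_mod_eq hr
  · rcases (le_of_mul_le_mul_add_of_lt hle (by omega)).eq_or_lt with rfl | hlt
    · rw [show 2 * (p - 1) * e + 0 = (p - 1) * degW p 2 w by rw [he]; ring]
      exact h.isCoreExtension_bump hc hmu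
    · obtain ⟨t, rfl⟩ : ∃ t, s = t + 1 := ⟨s - 1, by omega⟩
      rw [show 2 * (p - 1) * (t + 1) + 0 = (p - 1) * (2 * t + 1 + 1) by ring]
      exact h.isCoreExtension_rho hp hodd hc.head_ne_sigma ⟨t, rfl⟩ (by omega)
  · have hes : e ≤ s :=
      le_of_mul_le_mul_add_of_lt (c := 2 * (p - 1)) (r := p - 1) (by omega) (by omega)
    rw [show 2 * (p - 1) * s + 1 = 1 + (p - 1) * (2 * s) by ring]
    exact h.isCoreExtension_phi hp hodd hc.head_ne_sigma (even_two_mul s) (by omega)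
      (fun _ => hc.startsWithRhoOrPhi hmu)

theorem encode_spec (hp : 3 ≤ p) (hodd : Odd p) {a : List ℕ}
    (hres : ∀ x ∈ a, x % (2 * (p - 1)) = 0 ∨ x % (2 * (p - 1)) = 1)
    (hfirst : ∀ x ∈ a.head?, 4 * (p - 1) ≤ x) (hchain : a.IsChain (fun x y => p * x ≤ y)) :
    Admissible (encode p a) ∧ IsCore (encode p a) ∧ decode p (encode p a) = a := by
  induction a using List.reverseRecOn with
  | nil => exact ⟨.base, .inl rfl, by simp [encode, decode]⟩
  | append_singleton a x ih =>
    obtain ⟨hchain, hlast⟩ := isChain_append_singleton.1 hchain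
    obtain ⟨hw, hc, hdec⟩ := ih (fun y hy => hres y (by simp [hy]))
      (fun y hy => hfirst y (by cases a <;> simp_all)) hchain
    obtain ⟨hw', hc', hdec'⟩ := hw.isCoreExtension hp hodd hc (hres x (by simp))
      (by rwa [hdec]) (fun h0 => hfirst x (by rw [hdec] at h0; simp [h0]))
    rw [encode_append_singleton]
    exact ⟨hw', hc', by rw [hdec', hdec]⟩

theorem isStable_pad (hw : w.head? ≠ some sigma) {j : ℕ} (hj : 0 < j) : IsStable (pad j w) := by
  obtain ⟨i, rfl⟩ : ∃ i, j = i + 1 := ⟨j - 1, by omega⟩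
  unfold IsStable
  rw [head_pad hw]
  split_ifs <;> simp

def IsStableWord (p n m : ℕ) (w : List Letter) : Prop :=
  IsAdmissible w ∧ IsStable w ∧ w.length = n ∧ degW p 2 w = n + m

def IsAdmissibleSeq (p m : ℕ) (a : List ℕ) : Prop :=
  (∀ i ∈ a, 0 < i) ∧ (∀ i ∈ a, i % (2 * p - 2) = 0 ∨ i % (2 * p - 2) = 1) ∧
    (∀ h, a.head? = some h → 4 * (p - 1) ≤ h) ∧ a.IsChain (fun x y => p * x ≤ y) ∧
    1 + a.sum = m

theorem Admissible.isAdmissibleSeq_decode (hp : 3 ≤ p) (hodd : Odd p) (h : Admissible w)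
    {m : ℕ} (hdeg : degW p 2 w = w.length + m) : IsAdmissibleSeq p m (decode p w) := by
  have := h.degW_eq (p := p) (by omega)
  refine ⟨h.pos_of_mem_decode (by omega), ?_, h.le_of_mem_head?_decode (by omega),
    h.isChain_decode (by omega), by omega⟩
  rw [← Nat.mul_sub_one]
  exact h.mod_of_mem_decode hp hodd

theorem IsAdmissibleSeq.encode_spec (hp : 3 ≤ p) (hodd : Odd p) {m : ℕ} {a : List ℕ}
    (ha : IsAdmissibleSeq p m a) :
    Admissible (encode p a) ∧ IsCore (encode p a) ∧ decode p (encode p a) = a := by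
  obtain ⟨-, hres, hfirst, hchain, -⟩ := ha
  rw [← Nat.mul_sub_one] at hres
  exact Word.encode_spec hp hodd hres hfirst hchain

theorem IsAdmissibleSeq.isStableWord_pad_encode (hp : 3 ≤ p) (hodd : Odd p) {m n : ℕ}
    (hn : m < n) {a : List ℕ} (ha : IsAdmissibleSeq p m a) :
    IsStableWord p n m (pad (n - (encode p a).length) (encode p a)) := by
  obtain ⟨hw, hc, hdec⟩ := ha.encode_spec hp hodd
  have hdeg := hw.degW_eq (p := p) (by omega)
  have hlen := hw.two_mul_length_le_degW (p := p) (by omega) hc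
  have hsum := ha.2.2.2.2
  rw [hdec] at hdeg
  refine ⟨(admissible_pad hw _).isAdmissible, isStable_pad hc.head_ne_sigma (by omega), ?_, ?_⟩
  · rw [length_pad]; omega
  · rw [degW_pad]; omega

def stableWordEquiv (hp : 3 ≤ p) (hodd : Odd p) {m n : ℕ} (hn : m < n) :
    {w // IsStableWord p n m w} ≃ {a // IsAdmissibleSeq p m a} where
  toFun w := ⟨decode p w.1, (admissible_of_isAdmissible w.2.1).isAdmissibleSeq_decode hp hodd
    (by rw [w.2.2.2.1, w.2.2.2.2])⟩
  invFun a := ⟨pad (n - (encode p a.1).length) (encode p a.1),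
    a.2.isStableWord_pad_encode hp hodd hn⟩
  left_inv := by
    rintro ⟨w, hw, -, hlen, -⟩
    have hw := admissible_of_isAdmissible hw
    obtain ⟨j, hj⟩ := hw.exists_pad_core
    have := length_pad j (core w)
    ext1
    simp only [hw.encode_decode hp hodd]
    rwa [show n - (core w).length = j by rw [hj] at this; omega]
  right_inv := by
    rintro ⟨a, ha⟩
    ext1
    simp only [decode_pad]
    exact (ha.encode_spec hp hodd).2.2

end Word

theorem statement2_general (p m : ℕ) (hp : p.Prime) (hpodd : Odd p) :
    ∃ N : ℕ, ∀ n, N ≤ n →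
      Nat.card {w : List Letter //
          IsAdmissible w ∧ IsStable w ∧ w.length = n ∧ degW p 2 w = n + m} =
      Nat.card {a : List ℕ //
          (∀ i ∈ a, 0 < i) ∧
          (∀ i ∈ a, i % (2 * p - 2) = 0 ∨ i % (2 * p - 2) = 1) ∧
          (∀ h, a.head? = some h → 4 * (p - 1) ≤ h) ∧
          a.Chain' (fun x y => p * x ≤ y) ∧
          1 + a.sum = m} := by
  have hp3 : 3 ≤ p := hp.two_le.lt_of_ne (by rintro rfl; exact absurd hpodd (by decide))
  exact ⟨m + 1, fun n hn => Nat.card_congr (Word.stableWordEquiv hp3 hpodd hn)⟩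

theorem statement2 (p m : ℕ) (hp : p.Prime) (hpodd : Odd p) (hm : 1 ≤ m) :
    ∃ N : ℕ, ∀ n, N ≤ n →
      Nat.card {w : List Letter //
          IsAdmissible w ∧ IsStable w ∧ w.length = n ∧ degW p 2 w = n + m} =
      Nat.card {a : List ℕ //
          (∀ i ∈ a, 0 < i) ∧
          (∀ i ∈ a, i % (2 * p - 2) = 0 ∨ i % (2 * p - 2) = 1) ∧
          (∀ h, a.head? = some h → 4 * (p - 1) ≤ h) ∧
          a.Chain' (fun x y => p * x ≤ y) ∧
          1 + a.sum = m} :=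
  statement2_general p m hp hpodd
end

section
/- Let p be an odd prime and n ≥ 1. Every admissible word of length n has degree at least n + 1, with equality if and only if every letter of the word other than the final μ is either σ or ρ^0. Consequently, for each n ≥ 1 there is exactly one admissible word of length n and degree n + 1, and it is stable. -/
open Letter

/-!
A letter other than `μ` raises the degree of the word to its right by at least one, and by
exactly one only for `σ` and `ρ⁰`: for `k ≥ 1`, `ρᵏ` multiplies `1 + deg w` by `pᵏ > 1`, and
`deg(φᵏw) ≥ 2 + p · deg w`. Since `μ` occurs only at the right end, a word of length `n` has
degree at least `deg μ + (n - 1) = n + 1`. Among words built from `σ`, `ρ⁰` and `μ`,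
admissibility determines each letter from its right neighbour (`σ` left of `μ` and of `ρ⁰`,
`ρ⁰` left of `σ`), so there is exactly one such admissible word of each length.
-/

def IsBasicLetter (l : Letter) : Prop :=
  l = sigma ∨ l = rho 0 ∨ l = mu

section Degree

variable {p g : ℕ} {a : Letter}

theorem degW_add_one_le_degW_cons (hp : 0 < p) (ha : a ≠ mu) (w : List Letter) :
    degW p g w + 1 ≤ degW p g (a :: w) := by
  cases a with
  | mu => exact absurd rfl ha
  | sigma => simp only [degW]; omega
  | rho k =>
    simpa only [degW, add_comm 1] using Nat.le_mul_of_pos_left _ (pow_pos hp k)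
  | phi k =>
    calc degW p g w + 1 ≤ 2 + p * degW p g w := by nlinarith
      _ ≤ p ^ k * (2 + p * degW p g w) := Nat.le_mul_of_pos_left _ (pow_pos hp k)

theorem degW_cons_eq_add_one_iff (hp : 1 < p) (ha : a ≠ mu) (w : List Letter) :
    degW p g (a :: w) = degW p g w + 1 ↔ a = sigma ∨ a = rho 0 := by
  cases a with
  | mu => exact absurd rfl ha
  | sigma => simp only [degW, true_or, iff_true]; omega
  | rho k =>
    simp only [degW, reduceCtorEq, rho.injEq, false_or, add_comm 1]
    rw [Nat.mul_eq_right (by omega), Nat.pow_eq_one]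
    omega
  | phi k =>
    simp only [degW, reduceCtorEq, or_self, iff_false]
    have := Nat.le_mul_of_pos_left (2 + p * degW p g w) (pow_pos (by omega : 0 < p) k)
    nlinarith

end Degree

theorem ne_mu_of_allowedPair {a b : Letter} (h : allowedPair a b) : a ≠ mu := by
  rintro rfl
  cases b <;> simp [allowedPair] at h

theorem isAdmissible_iff {w : List Letter} :
    IsAdmissible w ↔ w ≠ [] ∧ w.getLast? = some mu ∧ w.IsChain allowedPair :=
  Iff.rfl

theorem isAdmissible_singleton_iff {a : Letter} : IsAdmissible [a] ↔ a = mu := by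
  simp [isAdmissible_iff]

theorem isAdmissible_cons_cons_iff {a b : Letter} {t : List Letter} :
    IsAdmissible (a :: b :: t) ↔ allowedPair a b ∧ IsAdmissible (b :: t) := by
  simp only [isAdmissible_iff, ne_eq, reduceCtorEq, not_false_eq_true, true_and,
    List.getLast?_cons_cons, List.isChain_cons_cons]
  tauto

theorem eq_of_allowedPair_of_isBasicLetter {a a' b : Letter} (h : allowedPair a b)
    (h' : allowedPair a' b) (ha : IsBasicLetter a) (ha' : IsBasicLetter a') : a = a' := by
  cases b <;> simp only [allowedPair, IsBasicLetter] at * <;> aesop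

namespace IsAdmissible

variable {p : ℕ}

theorem length_add_one_le_degW (hp : 0 < p) :
    ∀ {w : List Letter}, IsAdmissible w → w.length + 1 ≤ degW p 2 w
  | [], hw => absurd rfl hw.1
  | [a], hw => by rw [isAdmissible_singleton_iff.mp hw]; rfl
  | a :: b :: t, hw => by
    obtain ⟨hab, hbt⟩ := isAdmissible_cons_cons_iff.mp hw
    have htail := hbt.length_add_one_le_degW hp
    have hstep := degW_add_one_le_degW_cons (g := 2) hp (ne_mu_of_allowedPair hab) (b :: t)
    simp only [List.length_cons] at *
    omega

theorem degW_eq_iff (hp : 1 < p) :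
    ∀ {w : List Letter}, IsAdmissible w →
      (degW p 2 w = w.length + 1 ↔ ∀ l ∈ w, IsBasicLetter l)
  | [], hw => absurd rfl hw.1
  | [a], hw => by
    obtain rfl := isAdmissible_singleton_iff.mp hw
    simp [degW, IsBasicLetter]
  | a :: b :: t, hw => by
    obtain ⟨hab, hbt⟩ := isAdmissible_cons_cons_iff.mp hw
    have ha := ne_mu_of_allowedPair hab
    have hhead : IsBasicLetter a ↔ degW p 2 (a :: b :: t) = degW p 2 (b :: t) + 1 := by
      rw [degW_cons_eq_add_one_iff hp ha]
      simp [IsBasicLetter, ha]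
    have hp0 : 0 < p := by omega
    have htail := hbt.length_add_one_le_degW hp0
    have hstep := degW_add_one_le_degW_cons (g := 2) hp0 ha (b :: t)
    rw [List.forall_mem_cons, ← hbt.degW_eq_iff hp, hhead]
    simp only [List.length_cons] at *
    omega

theorem eq_of_length_eq :
    ∀ {w w' : List Letter}, IsAdmissible w → IsAdmissible w' → (∀ l ∈ w, IsBasicLetter l) →
      (∀ l ∈ w', IsBasicLetter l) → w.length = w'.length → w = w'
  | [], _, hw, _, _, _, _ => absurd rfl hw.1
  | _, [], _, hw', _, _, _ => absurd rfl hw'.1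
  | [a], [a'], hw, hw', _, _, _ => by
    rw [isAdmissible_singleton_iff.mp hw, isAdmissible_singleton_iff.mp hw']
  | [_], _ :: _ :: _, _, _, _, _, hlen => by simp at hlen
  | _ :: _ :: _, [_], _, _, _, _, hlen => by simp at hlen
  | a :: b :: t, a' :: b' :: t', hw, hw', hbasic, hbasic', hlen => by
    obtain ⟨hab, hbt⟩ := isAdmissible_cons_cons_iff.mp hw
    obtain ⟨hab', hbt'⟩ := isAdmissible_cons_cons_iff.mp hw'
    obtain ⟨rfl, rfl⟩ : b = b' ∧ t = t' := List.cons_eq_cons.mp <|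
      hbt.eq_of_length_eq hbt' (fun l hl => hbasic l (.tail _ hl))
        (fun l hl => hbasic' l (.tail _ hl)) (by simpa using hlen)
    rw [eq_of_allowedPair_of_isBasicLetter hab hab' (hbasic a (.head _)) (hbasic' a' (.head _))]

end IsAdmissible

theorem exists_isBasicLetter_allowedPair {b : Letter} (hb : IsBasicLetter b) :
    ∃ a, IsBasicLetter a ∧ allowedPair a b := by
  rcases hb with rfl | rfl | rfl
  · exact ⟨rho 0, by simp [IsBasicLetter, allowedPair]⟩
  · exact ⟨sigma, by simp [IsBasicLetter, allowedPair]⟩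
  · exact ⟨sigma, by simp [IsBasicLetter, allowedPair]⟩

theorem exists_isAdmissible_forall_isBasicLetter :
    ∀ n, 1 ≤ n → ∃ w, IsAdmissible w ∧ w.length = n ∧ ∀ l ∈ w, IsBasicLetter l
  | 0, h => absurd h (by omega)
  | 1, _ => ⟨[mu], isAdmissible_singleton_iff.mpr rfl, rfl, by simp [IsBasicLetter]⟩
  | n + 2, _ => by
    obtain ⟨w, hw, hlen, hbasic⟩ := exists_isAdmissible_forall_isBasicLetter (n + 1) (by omega)
    obtain ⟨b, t, rfl⟩ := List.exists_cons_of_ne_nil hw.1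
    obtain ⟨a, ha, hab⟩ := exists_isBasicLetter_allowedPair (hbasic b (.head _))
    exact ⟨a :: b :: t, isAdmissible_cons_cons_iff.mpr ⟨hab, hw⟩, by simp [← hlen],
      List.forall_mem_cons.mpr ⟨ha, hbasic⟩⟩

theorem isStable_of_forall_isBasicLetter {w : List Letter} (hw : w ≠ [])
    (h : ∀ l ∈ w, IsBasicLetter l) : IsStable w := by
  obtain ⟨a, t, rfl⟩ := List.exists_cons_of_ne_nil hw
  rcases h a (.head _) with rfl | rfl | rfl <;> simp [IsStable]

theorem statement4_general (p n : ℕ) (hp : p.Prime) (hn : 1 ≤ n) :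
    (∀ w : List Letter, IsAdmissible w → w.length = n →
      n + 1 ≤ degW p 2 w ∧
      (degW p 2 w = n + 1 ↔
        ∀ l ∈ w, l = Letter.sigma ∨ l = Letter.rho 0 ∨ l = Letter.mu)) ∧
    (∃! w : List Letter, IsAdmissible w ∧ w.length = n ∧ degW p 2 w = n + 1) ∧
    (∀ w : List Letter, IsAdmissible w → w.length = n → degW p 2 w = n + 1 →
      IsStable w) := by
  have hdeg : ∀ w : List Letter, IsAdmissible w → w.length = n →
      n + 1 ≤ degW p 2 w ∧ (degW p 2 w = n + 1 ↔ ∀ l ∈ w, IsBasicLetter l) := by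
    rintro w hw rfl
    exact ⟨hw.length_add_one_le_degW hp.pos, hw.degW_eq_iff hp.one_lt⟩
  obtain ⟨w₀, hw₀, hlen₀, hbasic₀⟩ := exists_isAdmissible_forall_isBasicLetter n hn
  refine ⟨hdeg, ⟨w₀, ⟨hw₀, hlen₀, (hdeg w₀ hw₀ hlen₀).2.2 hbasic₀⟩, ?_⟩, ?_⟩
  · rintro w ⟨hw, hlen, hw_deg⟩
    exact hw.eq_of_length_eq hw₀ ((hdeg w hw hlen).2.1 hw_deg) hbasic₀ (hlen.trans hlen₀.symm)
  · intro w hw hlen hw_deg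
    exact isStable_of_forall_isBasicLetter hw.1 ((hdeg w hw hlen).2.1 hw_deg)

theorem statement4 (p n : ℕ) (hp : p.Prime) (hpodd : Odd p) (hn : 1 ≤ n) :
    (∀ w : List Letter, IsAdmissible w → w.length = n →
      n + 1 ≤ degW p 2 w ∧
      (degW p 2 w = n + 1 ↔
        ∀ l ∈ w, l = Letter.sigma ∨ l = Letter.rho 0 ∨ l = Letter.mu)) ∧
    (∃! w : List Letter, IsAdmissible w ∧ w.length = n ∧ degW p 2 w = n + 1) ∧
    (∀ w : List Letter, IsAdmissible w → w.length = n → degW p 2 w = n + 1 →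
      IsStable w) :=
  statement4_general p n hp hn
end

section
/- Let p be an odd prime and m an integer. The map sending a sequence (a_1, ..., a_k) to (1 − a_k, 1 − a_{k−1}, ..., 1 − a_1) is a bijection from the set of sequences of positive integers (k ≥ 0, the empty sequence allowed) satisfying: each a_i ≡ 0 or 1 modulo 2(p−1), a_1 ≥ 4(p−1), a_{i+1} ≥ p·a_i for 1 ≤ i ≤ k−1, and 1 + a_1 + ... + a_k = m; onto the set of sequences of integers (i_1, ..., i_k) (k ≥ 0) satisfying: each i_j ≡ 0 or 1 modulo 2(p−1), i_j < p·i_{j+1} for 1 ≤ j ≤ k−1, i_k ≤ −3(p−1) when k ≥ 1, and −3 + (i_1 + ... + i_k) − k = −2 − m. -/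
/-!
The map is injective, and it transports each defining condition of one index set to the matching
condition of the other: `x ↦ 1 - x` swaps the residues `0` and `1` modulo `2(p - 1)`, and the sum
condition becomes the degree condition. The inequalities transform one way by linear arithmetic
and the other way thanks to the residues: for `x, y ≡ 0, 1 mod 2(p - 1)` the difference `p y - x`
lies in `2(p - 1)ℤ + {0, -1, p, p - 1}`, so `x < p y` forces `p (1 - y) ≤ 1 - x`; likewise
`h > 3(p - 1)` forces `h ≥ 4(p - 1)`. Descending from the last entry, every entry of a sequence in
the second set is `≤ 0`, so it is the image of a sequence of positive integers.
-/

theorem Int.one_sub_emod_eq_zero_or_one {n x : ℤ} (hx : x % n = 0 ∨ x % n = 1) :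
    (1 - x) % n = 0 ∨ (1 - x) % n = 1 := by
  rcases hx with hx | hx
  · rw [Int.sub_emod, hx, sub_zero, Int.emod_emod, Int.one_emod]
    split_ifs <;> simp
  · have h1 : 1 % n = 1 := by rw [← hx, Int.emod_emod]
    left
    rw [Int.sub_emod, hx, h1, sub_self, Int.zero_emod]

theorem Int.one_sub_emod_eq_zero_or_one_iff {n x : ℤ} :
    (1 - x) % n = 0 ∨ (1 - x) % n = 1 ↔ x % n = 0 ∨ x % n = 1 :=
  ⟨fun h => by simpa using Int.one_sub_emod_eq_zero_or_one h, Int.one_sub_emod_eq_zero_or_one⟩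

theorem Int.exists_eq_mul_add_of_emod_eq_zero_or_one {n x : ℤ} (hx : x % n = 0 ∨ x % n = 1) :
    ∃ q r, x = n * q + r ∧ (r = 0 ∨ r = 1) :=
  ⟨x / n, x % n, (Int.mul_ediv_add_emod x n).symm, hx⟩

theorem Int.mul_one_sub_le_one_sub_of_lt_mul {p x y : ℤ} (hp : 2 ≤ p)
    (hx : x % (2 * (p - 1)) = 0 ∨ x % (2 * (p - 1)) = 1)
    (hy : y % (2 * (p - 1)) = 0 ∨ y % (2 * (p - 1)) = 1) (h : x < p * y) :
    p * (1 - y) ≤ 1 - x := by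
  obtain ⟨q, r, rfl, hr⟩ := Int.exists_eq_mul_add_of_emod_eq_zero_or_one hx
  obtain ⟨q', r', rfl, hr'⟩ := Int.exists_eq_mul_add_of_emod_eq_zero_or_one hy
  obtain hk | hk | hk : p * q' - q ≤ -1 ∨ p * q' - q = 0 ∨ 1 ≤ p * q' - q := by omega
  all_goals rcases hr with rfl | rfl <;> rcases hr' with rfl | rfl <;> nlinarith

theorem Int.four_mul_le_of_three_mul_lt {p h : ℤ} (hp : 2 ≤ p)
    (hh : h % (2 * (p - 1)) = 0 ∨ h % (2 * (p - 1)) = 1) (h3 : 3 * (p - 1) < h) :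
    4 * (p - 1) ≤ h := by
  obtain ⟨q, r, rfl, hr⟩ := Int.exists_eq_mul_add_of_emod_eq_zero_or_one hh
  have hq : 2 ≤ q := by
    by_contra! hq
    rcases hr with rfl | rfl <;> nlinarith
  rcases hr with rfl | rfl <;> nlinarith

theorem Nat.emod_eq_zero_or_one_iff_intCast {p x : ℕ} (hp : 1 ≤ p) :
    x % (2 * (p - 1)) = 0 ∨ x % (2 * (p - 1)) = 1 ↔
      (x : ℤ) % (2 * ((p : ℤ) - 1)) = 0 ∨ (x : ℤ) % (2 * ((p : ℤ) - 1)) = 1 := by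
  have hcast : 2 * ((p : ℤ) - 1) = ((2 * (p - 1) : ℕ) : ℤ) := by push_cast [hp]; ring
  rw [hcast, ← Int.natCast_mod]
  omega

theorem List.IsChain.forall_nonpos {p : ℤ} (hp : 0 ≤ p) {l : List ℤ}
    (hl : l.IsChain fun x y => x < p * y) (hlast : ∀ j, l.getLast? = some j → j ≤ 0) :
    ∀ x ∈ l, x ≤ 0 :=
  hl.backwards_induction _ _ (fun _ _ hxy hy => by nlinarith)
    (fun hne => hlast _ (List.getLast?_eq_some_getLast hne))

def toLieIndex (a : List ℕ) : List ℤ := (a.map fun x : ℕ => 1 - (x : ℤ)).reverse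

/- In the statement the ascription `(x : ℤ)` makes Lean coerce the list `a` itself (through the
list monad), so the map there is only propositionally equal to `toLieIndex`. -/
theorem toLieIndex_eq_reverse_map_one_sub :
    (fun a : List ℕ => (a.map (fun x => 1 - (x : ℤ))).reverse) = toLieIndex := by
  funext a
  simp only [toLieIndex, List.bind_eq_flatMap, List.pure_def, ← List.map_eq_flatMap, List.map_map]
  rfl

def taqIndexSet (p : ℕ) (m : ℤ) : Set (List ℕ) :=
  {a | (∀ i ∈ a, 0 < i) ∧
    (∀ i ∈ a, i % (2 * (p - 1)) = 0 ∨ i % (2 * (p - 1)) = 1) ∧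
    (∀ h, a.head? = some h → 4 * (p - 1) ≤ h) ∧
    a.IsChain (fun x y => p * x ≤ y) ∧
    1 + (a.sum : ℤ) = m}

def lieIndexSet (p : ℕ) (m : ℤ) : Set (List ℤ) :=
  {l | (∀ i ∈ l, i % (2 * ((p : ℤ) - 1)) = 0 ∨ i % (2 * ((p : ℤ) - 1)) = 1) ∧
    l.IsChain (fun x y => x < (p : ℤ) * y) ∧
    (∀ j, l.getLast? = some j → j ≤ -3 * ((p : ℤ) - 1)) ∧
    -3 + l.sum - l.length = -2 - m}

theorem toLieIndex_injective : Function.Injective toLieIndex := by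
  intro a b h
  exact List.map_injective_iff.mpr (fun x y hxy => by simpa using hxy) (List.reverse_injective h)

theorem mem_range_toLieIndex {l : List ℤ} (hl : ∀ x ∈ l, x ≤ 1) :
    l ∈ Set.range toLieIndex := by
  refine ⟨(l.map fun x => (1 - x).toNat).reverse, ?_⟩
  rw [toLieIndex, List.map_reverse, List.map_map, List.reverse_reverse]
  conv_rhs => rw [← List.map_id l]
  refine List.map_congr_left fun x hx => ?_
  have := hl x hx
  simp only [Function.comp_apply, id_eq]
  omega

section
variable {p : ℕ} {a : List ℕ}

theorem forall_mem_toLieIndex_emod_iff {n : ℤ} :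
    (∀ i ∈ toLieIndex a, i % n = 0 ∨ i % n = 1) ↔
      ∀ x ∈ a, (x : ℤ) % n = 0 ∨ (x : ℤ) % n = 1 := by
  simp only [toLieIndex, List.mem_reverse, List.mem_map, forall_exists_index, and_imp,
    forall_apply_eq_imp_iff₂, Int.one_sub_emod_eq_zero_or_one_iff]

theorem getLast?_toLieIndex :
    (toLieIndex a).getLast? = a.head?.map fun x : ℕ => 1 - (x : ℤ) := by
  rw [toLieIndex, List.getLast?_reverse, List.head?_map]

theorem sum_toLieIndex : (toLieIndex a).sum = a.length - a.sum := by
  rw [toLieIndex, List.sum_reverse]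
  induction a with
  | nil => simp
  | cons x a ih =>
    rw [List.map_cons, List.sum_cons, ih, List.length_cons, List.sum_cons]
    push_cast
    ring

theorem length_toLieIndex : (toLieIndex a).length = a.length := by
  simp [toLieIndex]

theorem isChain_toLieIndex_iff (hp : 2 ≤ p)
    (ha : ∀ x ∈ a,
      (x : ℤ) % (2 * ((p : ℤ) - 1)) = 0 ∨ (x : ℤ) % (2 * ((p : ℤ) - 1)) = 1) :
    (toLieIndex a).IsChain (fun x y => x < (p : ℤ) * y) ↔
      a.IsChain (fun x y => p * x ≤ y) := by
  rw [toLieIndex, List.isChain_reverse, List.isChain_map]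
  refine List.IsChain.iff_of_mem_imp fun x y hx hy => ⟨fun h => ?_, fun h => ?_⟩
  · have := Int.mul_one_sub_le_one_sub_of_lt_mul (by exact_mod_cast hp)
      (Int.one_sub_emod_eq_zero_or_one (ha y hy)) (Int.one_sub_emod_eq_zero_or_one (ha x hx)) h
    simp only [sub_sub_cancel] at this
    exact_mod_cast this
  · have : (p : ℤ) * x ≤ y := by exact_mod_cast h
    have : (2 : ℤ) ≤ p := by exact_mod_cast hp
    linarith

theorem getLast?_toLieIndex_le_iff (hp : 2 ≤ p)
    (ha : ∀ x ∈ a,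
      (x : ℤ) % (2 * ((p : ℤ) - 1)) = 0 ∨ (x : ℤ) % (2 * ((p : ℤ) - 1)) = 1) :
    (∀ j, (toLieIndex a).getLast? = some j → j ≤ -3 * ((p : ℤ) - 1)) ↔
      ∀ h, a.head? = some h → 4 * (p - 1) ≤ h := by
  rw [getLast?_toLieIndex]
  cases a with
  | nil => simp
  | cons x a =>
    have hx := Int.four_mul_le_of_three_mul_lt (p := p) (h := x) (by exact_mod_cast hp)
      (ha x List.mem_cons_self)
    simp only [List.head?_cons, Option.map_some, Option.some.injEq, forall_eq']
    omega

end

theorem forall_nonpos_of_mem_lieIndexSet {p : ℕ} {m : ℤ} {l : List ℤ} (hp : 1 ≤ p)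
    (hl : l ∈ lieIndexSet p m) : ∀ x ∈ l, x ≤ 0 :=
  hl.2.1.forall_nonpos (by positivity) fun j hj => (hl.2.2.1 j hj).trans (by omega)

theorem toLieIndex_mem_lieIndexSet_iff {p : ℕ} {m : ℤ} {a : List ℕ} (hp : 2 ≤ p) :
    toLieIndex a ∈ lieIndexSet p m ↔ a ∈ taqIndexSet p m := by
  have hres_iff := fun x : ℕ => Nat.emod_eq_zero_or_one_iff_intCast (x := x) (by omega : 1 ≤ p)
  constructor
  · intro ha
    have hnonpos := forall_nonpos_of_mem_lieIndexSet (by omega) ha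
    obtain ⟨hres, hchain, hlast, hsum⟩ := ha
    rw [forall_mem_toLieIndex_emod_iff] at hres
    refine ⟨fun x hx => ?_, fun x hx => (hres_iff x).2 (hres x hx),
      (getLast?_toLieIndex_le_iff hp hres).1 hlast, (isChain_toLieIndex_iff hp hres).1 hchain, ?_⟩
    · have := hnonpos _ (List.mem_reverse.2 (List.mem_map_of_mem hx))
      omega
    · rw [sum_toLieIndex, length_toLieIndex] at hsum
      omega
  · rintro ⟨-, hres, hhead, hchain, hsum⟩
    replace hres := fun x hx => (hres_iff x).1 (hres x hx)
    refine ⟨forall_mem_toLieIndex_emod_iff.2 hres, (isChain_toLieIndex_iff hp hres).2 hchain,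
      (getLast?_toLieIndex_le_iff hp hres).2 hhead, ?_⟩
    rw [sum_toLieIndex, length_toLieIndex]
    omega

theorem statement11_general (p : ℕ) (m : ℤ) (hp : p.Prime) :
    Set.BijOn (fun a : List ℕ => (a.map (fun x => 1 - (x : ℤ))).reverse)
      {a : List ℕ |
        (∀ i ∈ a, 0 < i) ∧
        (∀ i ∈ a, i % (2 * (p - 1)) = 0 ∨ i % (2 * (p - 1)) = 1) ∧
        (∀ h, a.head? = some h → 4 * (p - 1) ≤ h) ∧
        a.Chain' (fun x y => p * x ≤ y) ∧
        1 + (a.sum : ℤ) = m}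
      {l : List ℤ |
        (∀ i ∈ l, i % (2 * ((p : ℤ) - 1)) = 0 ∨ i % (2 * ((p : ℤ) - 1)) = 1) ∧
        l.Chain' (fun x y => x < (p : ℤ) * y) ∧
        (∀ j, l.getLast? = some j → j ≤ -3 * ((p : ℤ) - 1)) ∧
        -3 + l.sum - l.length = -2 - m} := by
  rw [toLieIndex_eq_reverse_map_one_sub]
  have hpreimage : toLieIndex ⁻¹' lieIndexSet p m = taqIndexSet p m :=
    Set.ext fun _ => toLieIndex_mem_lieIndexSet_iff hp.two_le
  have hrange : lieIndexSet p m ⊆ Set.range toLieIndex := fun _ hl =>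
    mem_range_toLieIndex fun x hx =>
      (forall_nonpos_of_mem_lieIndexSet hp.one_le hl x hx).trans zero_le_one
  have hbij := toLieIndex_injective.injOn.bijOn_image (s := toLieIndex ⁻¹' lieIndexSet p m)
  rw [Set.image_preimage_eq_of_subset hrange, hpreimage] at hbij
  exact hbij

theorem statement11 (p : ℕ) (m : ℤ) (hp : p.Prime) (hpodd : Odd p) :
    Set.BijOn (fun a : List ℕ => (a.map (fun x => 1 - (x : ℤ))).reverse)
      {a : List ℕ |
        (∀ i ∈ a, 0 < i) ∧
        (∀ i ∈ a, i % (2 * (p - 1)) = 0 ∨ i % (2 * (p - 1)) = 1) ∧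
        (∀ h, a.head? = some h → 4 * (p - 1) ≤ h) ∧
        a.Chain' (fun x y => p * x ≤ y) ∧
        1 + (a.sum : ℤ) = m}
      {l : List ℤ |
        (∀ i ∈ l, i % (2 * ((p : ℤ) - 1)) = 0 ∨ i % (2 * ((p : ℤ) - 1)) = 1) ∧
        l.Chain' (fun x y => x < (p : ℤ) * y) ∧
        (∀ j, l.getLast? = some j → j ≤ -3 * ((p : ℤ) - 1)) ∧
        -3 + l.sum - l.length = -2 - m} :=
  statement11_general p m hp
end
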